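/- arXiv:2206.10557 — 3 statements merged into one kernel-verified Lean document; each statement's English description precedes it below -/
import Mathlib

section
/- Let G be a graph and let χ be a 2-stable pair coloring of G. Let v₁, w₁, v₂, w₂ ∈ V(G) with χ(v₁,w₁) = χ(v₂,w₂), and let D ⊆ C_V(G,χ) be a set of vertex colors. If there is a path from v₁ to w₁ in G that avoids D, then there is a path from v₂ to w₂ in G that avoids D. -/
namespace WL

open SimpleGraph

/-! ### Iterated colorings of the 2-dimensional Weisfeiler--Leman algorithm

`WLColor C n` is the domain of colors after `n` refinement rounds of 2-WL, where the
input graph carries an arc/pair coloring with values in `C`.  The initial color of a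
pair records its ordered isomorphism type (equality pattern, adjacency in both
directions) together with its input color. -/

def WLColor (C : Type) : ℕ → Type :=
  fun n => Nat.rec (Prop × Prop × Prop × C) (fun _ ih => ih × Multiset (ih × ih)) n

/-- The coloring of ordered pairs computed by 2-WL after `n` rounds on the (directed)
graph with adjacency relation `A` and input pair coloring `κ`. -/
def wlRound {V C : Type} [Fintype V] (A : V → V → Prop) (κ : V → V → C) :
    (n : ℕ) → V × V → WLColor C n
  | 0 => fun p => (p.1 = p.2, A p.1 p.2, A p.2 p.1, κ p.1 p.2)
  | n + 1 => fun p =>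
      (wlRound A κ n p,
        Finset.univ.val.map fun u => (wlRound A κ n (u, p.2), wlRound A κ n (p.1, u)))

/-- Equality of the stable 2-WL colors of a pair `p` of the arc/pair-colored graph
`(A, κ)` and a pair `q` of the arc/pair-colored graph `(B, κ')` (the stable colors
agree iff the colors agree after every finite number of rounds). -/
def wl2EqC {V W C : Type} [Fintype V] [Fintype W]
    (A : V → V → Prop) (κ : V → V → C) (B : W → W → Prop) (κ' : W → W → C)
    (p : V × V) (q : W × W) : Prop :=
  ∀ n, wlRound A κ n p = wlRound B κ' n q

/-- Equality of stable 2-WL colors across two (uncolored) graphs. -/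
def wl2Eq {V W : Type} [Fintype V] [Fintype W] (A : V → V → Prop) (B : W → W → Prop)
    (p : V × V) (q : W × W) : Prop :=
  wl2EqC A (fun _ _ => ()) B (fun _ _ => ()) p q

/-- `wl2 A p q`: the pairs `p` and `q` receive the same color in the stable coloring
`WL²` computed by 2-WL on the graph with adjacency relation `A`. -/
def wl2 {V : Type} [Fintype V] (A : V → V → Prop) (p q : V × V) : Prop :=
  wl2Eq A A p q

/-- Having the same stable 2-WL color is an equivalence relation on pairs. -/
def wl2Setoid {V : Type} [Fintype V] (A : V → V → Prop) : Setoid (V × V) :=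
  ⟨wl2 A, ⟨fun _ _ => rfl, fun h n => (h n).symm, fun h₁ h₂ n => (h₁ n).trans (h₂ n)⟩⟩

/-! ### Color refinement (1-WL) on pair-colored graphs, and the set `Disc` -/

def WL1Color (C : Type) : ℕ → Type :=
  fun n => Nat.rec (List Prop) (fun _ ih => ih × Multiset (ih × C × C)) n

/-- The vertex coloring computed by 1-WL (color refinement) after `n` rounds, on the
complete graph whose pairs are colored by `κ`, where the vertices in the list `vs`
are individualized. -/
def wl1Round {V C : Type} [Fintype V] (κ : V → V → C) (vs : List V) :
    (n : ℕ) → V → WL1Color C n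
  | 0 => fun v => vs.map fun x => (x = v : Prop)
  | n + 1 => fun v =>
      (wl1Round κ vs n v,
        Finset.univ.val.map fun w => (wl1Round κ vs n w, κ v w, κ w v))

/-- `discSet A vs = Disc_G(vs)`: the set of vertices lying in singleton color classes
of the stable coloring computed by 1-WL on the graph with adjacency relation `A`,
where every pair of vertices is initially colored by its `WL²` color and the
vertices of `vs` are individualized. -/
def discSet {V : Type} [Fintype V] (A : V → V → Prop) (vs : List V) : Set V :=
  {v | ∀ w,
    (∀ n, wl1Round (fun x y => Quotient.mk (wl2Setoid A) (x, y)) vs n w =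
          wl1Round (fun x y => Quotient.mk (wl2Setoid A) (x, y)) vs n v) → w = v}

/-! ### The k-dimensional Weisfeiler--Leman algorithm -/

def WLkColor (k : ℕ) : ℕ → Type :=
  fun n => Nat.rec (Fin k → Fin k → Prop × Prop) (fun _ ih => ih × Multiset (Fin k → ih)) n

/-- The coloring of `k`-tuples computed by `k`-WL after `n` rounds on the graph with
adjacency relation `A`. -/
def wlkRound {V : Type} [Fintype V] (A : V → V → Prop) (k : ℕ) :
    (n : ℕ) → (Fin k → V) → WLkColor k n
  | 0 => fun t i j => (t i = t j, A (t i) (t j))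
  | n + 1 => fun t =>
      (wlkRound A k n t,
        Finset.univ.val.map fun w => fun i => wlkRound A k n (Function.update t i w))

/-! ### Minors, planarity, connectivity -/

/-- `H` is a minor of `G`, via disjoint nonempty connected branch sets. -/
def IsMinor {V W : Type} (G : SimpleGraph V) (H : SimpleGraph W) : Prop :=
  ∃ f : W → Set V,
    (∀ w, (f w).Nonempty) ∧
    (∀ w, (G.induce (f w)).Preconnected) ∧
    (∀ w₁ w₂, w₁ ≠ w₂ → Disjoint (f w₁) (f w₂)) ∧
    (∀ w₁ w₂, H.Adj w₁ w₂ → ∃ v₁ ∈ f w₁, ∃ v₂ ∈ f w₂, G.Adj v₁ v₂)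

/-- Planarity, via Wagner's theorem: neither `K₅` nor `K₃,₃` is a minor. -/
def IsPlanar {V : Type} (G : SimpleGraph V) : Prop :=
  ¬ IsMinor G (completeGraph (Fin 5)) ∧
  ¬ IsMinor G (completeBipartiteGraph (Fin 3) (Fin 3))

/-- `S` is a separator of `G`: deleting `S` increases the number of connected
components. -/
def IsSeparator {V : Type} (G : SimpleGraph V) (S : Set V) : Prop :=
  Nat.card G.ConnectedComponent < Nat.card (G.induce Sᶜ).ConnectedComponent

/-- `G` is 3-connected: it is connected and has no separator of size at most 2. -/
def ThreeConnected {V : Type} (G : SimpleGraph V) : Prop :=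
  G.Connected ∧ ∀ S : Set V, S.ncard ≤ 2 → ¬ IsSeparator G S

/-! ### Subgraphs induced by WL² edge colors; types of edge colors

An edge color of `WL²(G)` is represented by a pair `c : V × V` with `G.Adj c.1 c.2`;
the color itself is the `wl2`-equivalence class of `c`. -/

/-- `c` (i.e. the `WL²`-class of `c`) is an edge color of `G`. -/
def EdgeColor {V : Type} (G : SimpleGraph V) (c : V × V) : Prop := G.Adj c.1 c.2

/-- The graph `G[c]` (on the full vertex set): edges are pairs of one of whose
orientations has `WL²`-color `c`. -/
def colorGraph {V : Type} [Fintype V] (G : SimpleGraph V) (c : V × V) : SimpleGraph V :=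
  SimpleGraph.fromRel fun v w => G.Adj v w ∧ wl2 G.Adj (v, w) c

/-- The graph `G[{c,d}]` (on the full vertex set). -/
def colorGraph2 {V : Type} [Fintype V] (G : SimpleGraph V) (c d : V × V) : SimpleGraph V :=
  SimpleGraph.fromRel fun v w => G.Adj v w ∧ (wl2 G.Adj (v, w) c ∨ wl2 G.Adj (v, w) d)

/-- A graph restricted to its support (the set of non-isolated vertices); used to
realize color subgraphs `G[C]` whose vertex set is the set of endpoints of their
edges. -/
def onSupport {V : Type} (H : SimpleGraph V) : SimpleGraph ↥H.support :=
  H.induce H.support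

def colorGraphOn {V : Type} [Fintype V] (G : SimpleGraph V) (c : V × V) :
    SimpleGraph ↥(colorGraph G c).support :=
  onSupport (colorGraph G c)

def colorGraph2On {V : Type} [Fintype V] (G : SimpleGraph V) (c d : V × V) :
    SimpleGraph ↥(colorGraph2 G c d).support :=
  onSupport (colorGraph2 G c d)

/-- The vertex set of the connected component of `H` containing `v`. -/
def compVerts {V : Type} (H : SimpleGraph V) (v : V) : Set V := {w | H.Reachable v w}

/-- The edge set of the connected component of `H` containing `v`. -/
def compEdges {V : Type} (H : SimpleGraph V) (v : V) : Set (Sym2 V) :=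
  {e | e ∈ H.edgeSet ∧ ∀ x ∈ e, H.Reachable v x}

/-- Type I: every connected component is a tree (one face). -/
def TypeI {V : Type} (H : SimpleGraph V) : Prop :=
  ∀ v ∈ H.support, (compEdges H v).ncard + 1 = (compVerts H v).ncard

/-- Type II: every connected component has exactly as many edges as vertices,
i.e. is a cycle (two faces). -/
def TypeII {V : Type} (H : SimpleGraph V) : Prop :=
  ∀ v ∈ H.support, (compEdges H v).ncard = (compVerts H v).ncard

/-- Type III: every connected component has more edges than vertices
(at least three faces). -/
def TypeIII {V : Type} (H : SimpleGraph V) : Prop :=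
  ∀ v ∈ H.support, (compVerts H v).ncard < (compEdges H v).ncard

/-- `G[c]` is unicolored: all its vertices get the same `WL²` vertex color. -/
def Unicolored {V : Type} [Fintype V] (G : SimpleGraph V) (c : V × V) : Prop :=
  ∀ v ∈ (colorGraph G c).support, ∀ w ∈ (colorGraph G c).support, wl2 G.Adj (v, v) (w, w)

/-- `G[c]` is bicolored: exactly two `WL²` vertex colors occur on it. -/
def Bicolored {V : Type} [Fintype V] (G : SimpleGraph V) (c : V × V) : Prop :=
  (∃ v ∈ (colorGraph G c).support, ∃ w ∈ (colorGraph G c).support,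
      ¬ wl2 G.Adj (v, v) (w, w)) ∧
  (∀ x ∈ (colorGraph G c).support, ∀ y ∈ (colorGraph G c).support,
      ∀ z ∈ (colorGraph G c).support,
      wl2 G.Adj (x, x) (y, y) ∨ wl2 G.Adj (x, x) (z, z) ∨ wl2 G.Adj (y, y) (z, z))

/-- Type IIc: `c` has Type II, `G[c]` is unicolored, and the relation
`χ(v,w) = c` is not symmetric (the components of `G[c]` are directed cycles). -/
def HasTypeIIc {V : Type} [Fintype V] (G : SimpleGraph V) (c : V × V) : Prop :=
  TypeII (colorGraph G c) ∧ Unicolored G c ∧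
    ∃ v w : V, wl2 G.Adj (v, w) c ∧ ¬ wl2 G.Adj (w, v) c

/-- Type IIa: `c` has Type II but not Type IIc, and `G[c]` is disconnected. -/
def HasTypeIIa {V : Type} [Fintype V] (G : SimpleGraph V) (c : V × V) : Prop :=
  TypeII (colorGraph G c) ∧ ¬ HasTypeIIc G c ∧ ¬ (colorGraphOn G c).Connected

/-- The graph `G` has Type IIa: some edge color has Type IIa and every edge color
has Type I or Type IIa. -/
def GraphTypeIIa {V : Type} [Fintype V] (G : SimpleGraph V) : Prop :=
  (∃ c : V × V, EdgeColor G c ∧ HasTypeIIa G c) ∧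
  (∀ c : V × V, EdgeColor G c → (TypeI (colorGraph G c) ∨ HasTypeIIa G c))

/-- The edge color `c` defines a matching. -/
def DefinesMatching {V : Type} [Fintype V] (G : SimpleGraph V) (c : V × V) : Prop :=
  ∀ v w : V, wl2 G.Adj (v, w) c →
    (¬ wl2 G.Adj (v, v) (w, w)) ∧
    (∀ v', wl2 G.Adj (v', w) c → v' = v) ∧
    (∀ w', wl2 G.Adj (v, w') c → w' = w)

/-- `x` and `y` are joined by an edge of color `d` or of the reverse color `d⁻¹`. -/
def dAdj {V : Type} [Fintype V] (G : SimpleGraph V) (d : V × V) (x y : V) : Prop :=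
  wl2 G.Adj (x, y) d ∨ wl2 G.Adj (y, x) d

/-- The edge color `c` admits short `d`-connections: two vertices in distinct
connected components of `G[c]` are joined by a path of length at most 2 all of
whose edges have color `d` or `d⁻¹`. -/
def AdmitsShortConnections {V : Type} [Fintype V] (G : SimpleGraph V) (c d : V × V) : Prop :=
  ∃ v₁ ∈ (colorGraph G c).support, ∃ v₂ ∈ (colorGraph G c).support,
    ¬ (colorGraph G c).Reachable v₁ v₂ ∧
    (dAdj G d v₁ v₂ ∨ ∃ u, dAdj G d v₁ u ∧ dAdj G d u v₂)

/-! ### Orbit determination -/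

/-- 2-WL determines pair orbits of `G`. -/
def DeterminesPairOrbits {V : Type} [Fintype V] (G : SimpleGraph V) : Prop :=
  ∀ v₁ v₂ : V, ∀ (W : Type) [Fintype W] (H : SimpleGraph W), ∀ w₁ w₂ : W,
    wl2Eq G.Adj H.Adj (v₁, v₂) (w₁, w₂) → ∃ φ : G ≃g H, φ v₁ = w₁ ∧ φ v₂ = w₂

/-- 2-WL determines arc orbits of `G`. -/
def DeterminesArcOrbits {V : Type} [Fintype V] (G : SimpleGraph V) : Prop :=
  ∀ v₁ v₂ : V, (v₁ = v₂ ∨ G.Adj v₁ v₂) →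
    ∀ (W : Type) [Fintype W] (H : SimpleGraph W), ∀ w₁ w₂ : W, (w₁ = w₂ ∨ H.Adj w₁ w₂) →
    wl2Eq G.Adj H.Adj (v₁, v₂) (w₁, w₂) → ∃ φ : G ≃g H, φ v₁ = w₁ ∧ φ v₂ = w₂

/-- An isomorphism from the directed graph `A` onto the (symmetric) adjacency
relation of the simple graph `H`. -/
def DigraphIsoTo {V W : Type} (A : V → V → Prop) (H : SimpleGraph W) : Prop :=
  ∃ e : V ≃ W, ∀ v w, A v w ↔ H.Adj (e v) (e w)

/-- 2-WL determines arc orbits of the directed graph `A`. -/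
def DigraphDeterminesArcOrbits {V : Type} [Fintype V] (A : V → V → Prop) : Prop :=
  ∀ v₁ v₂ : V, (v₁ = v₂ ∨ A v₁ v₂ ∨ A v₂ v₁) →
    ∀ (W : Type) [Fintype W] (B : W → W → Prop), (∀ w, ¬ B w w) →
    ∀ w₁ w₂ : W, (w₁ = w₂ ∨ B w₁ w₂ ∨ B w₂ w₁) →
    wl2Eq A B (v₁, v₂) (w₁, w₂) →
    ∃ e : V ≃ W, (∀ x y, A x y ↔ B (e x) (e y)) ∧ e v₁ = w₁ ∧ e v₂ = w₂

/-! ### 2-stable colorings -/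

/-- A pair coloring `χ` is 2-stable w.r.t. `G`: it refines `WL²(G)` and is not
strictly refined by one round of 2-WL. -/
def IsTwoStable {V C : Type} [Fintype V] (G : SimpleGraph V) (χ : V × V → C) : Prop :=
  (∀ p q : V × V, χ p = χ q → wl2 G.Adj p q) ∧
  (∀ p q : V × V, χ p = χ q →
    (Finset.univ.val.map fun u => (χ (u, p.2), χ (p.1, u))) =
    (Finset.univ.val.map fun u => (χ (u, q.2), χ (q.1, u))))

/-- `G[Cs]` for a pair coloring `χ` and a set of colors `Cs` (on the full vertex
set). -/
def chiColorGraph {V C : Type} (G : SimpleGraph V) (χ : V × V → C) (Cs : Set C) :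
    SimpleGraph V :=
  SimpleGraph.fromRel fun v w => G.Adj v w ∧ χ (v, w) ∈ Cs

/-! ### Components avoiding a set, neighborhoods of sets -/

/-- The vertex set of the connected component of `z` in `G - A`. -/
def componentWithin {V : Type} (G : SimpleGraph V) (A : Set V) (z : V) : Set V :=
  {y | ∃ p : G.Walk z y, ∀ u ∈ p.support, u ∉ A}

/-- `N_G(Z)`: the set of vertices outside `Z` having a neighbor in `Z`. -/
def outerNeighborhood {V : Type} (G : SimpleGraph V) (Z : Set V) : Set V :=
  {v | v ∉ Z ∧ ∃ u ∈ Z, G.Adj u v}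


/-! ### Polyhedral graphs -/

/-- The tetrahedron graph `K₄`. -/
def tetrahedronGraph : SimpleGraph (Fin 4) := completeGraph (Fin 4)

/-- The cube graph `Q₃`. -/
def cubeGraph : SimpleGraph (Fin 3 → Bool) :=
  SimpleGraph.fromRel fun x y => ∃ i, x i ≠ y i ∧ ∀ j, j ≠ i → x j = y j

/-- The octahedron graph `K₂,₂,₂`. -/
def octahedronGraph : SimpleGraph (Fin 3 × Fin 2) :=
  SimpleGraph.fromRel fun p q => p.1 ≠ q.1

/-- The dodecahedron graph, realized as the generalized Petersen graph GP(10,2). -/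
def dodecahedronGraph : SimpleGraph (Bool × Fin 10) :=
  SimpleGraph.fromRel fun p q =>
    (p.1 = false ∧ q.1 = false ∧ q.2 = p.2 + 1) ∨
    (p.1 = true ∧ q.1 = true ∧ q.2 = p.2 + 2) ∨
    (p.1 ≠ q.1 ∧ p.2 = q.2)

/-- The icosahedron graph, realized as a pentagonal antiprism (the circulant
`Ci₁₀(1,2)`) capped by two apexes. -/
def icosahedronGraph : SimpleGraph (Fin 10 ⊕ Bool) :=
  SimpleGraph.fromRel fun p q =>
    (∃ i j : Fin 10, p = Sum.inl i ∧ q = Sum.inl j ∧ (j = i + 1 ∨ j = i + 2)) ∨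
    (∃ (i : Fin 10) (b : Bool), p = Sum.inl i ∧ q = Sum.inr b ∧ (i.val % 2 = 0 ↔ b = false))

/-- The cuboctahedron graph, realized as the line graph (= medial graph) of the cube. -/
def cuboctahedronGraph : SimpleGraph ↥cubeGraph.edgeSet :=
  SimpleGraph.fromRel fun e f =>
    ∃ v : Fin 3 → Bool, v ∈ (e : Sym2 (Fin 3 → Bool)) ∧ v ∈ (f : Sym2 (Fin 3 → Bool))

/-- The icosidodecahedron graph, realized as the medial graph of the icosahedron. -/
def icosidodecahedronGraph : SimpleGraph ↥icosahedronGraph.edgeSet :=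
  SimpleGraph.fromRel fun e f =>
    ∃ v a b : Fin 10 ⊕ Bool, (e : Sym2 (Fin 10 ⊕ Bool)) = s(v, a) ∧
      (f : Sym2 (Fin 10 ⊕ Bool)) = s(v, b) ∧ icosahedronGraph.Adj a b

/-- The rhombic dodecahedron graph, realized as the vertex-face incidence graph of
the cube (faces of the cube are indexed by `Fin 3 × Bool`). -/
def rhombicDodecahedronGraph : SimpleGraph ((Fin 3 → Bool) ⊕ (Fin 3 × Bool)) :=
  SimpleGraph.fromRel fun p q =>
    ∃ (x : Fin 3 → Bool) (i : Fin 3) (b : Bool), p = Sum.inl x ∧ q = Sum.inr (i, b) ∧ x i = b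

/-- The (triangular) faces of the icosahedron are exactly its 3-cliques. -/
def IcosaFace : Type := {s : Finset (Fin 10 ⊕ Bool) // icosahedronGraph.IsNClique 3 s}

/-- The rhombic triacontahedron graph, realized as the vertex-face incidence graph
of the icosahedron. -/
def rhombicTriacontahedronGraph : SimpleGraph ((Fin 10 ⊕ Bool) ⊕ IcosaFace) :=
  SimpleGraph.fromRel fun p q =>
    ∃ (v : Fin 10 ⊕ Bool) (t : IcosaFace), p = Sum.inl v ∧ q = Sum.inr t ∧ v ∈ t.val

/-! ### Truncating a set of vertices of a (plane) graph -/

/-- Vertex set after truncating the vertices of `W` in `H`: the untouched old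
vertices together with one vertex for every arc emanating from a vertex of `W`. -/
def truncVertexType {V : Type} (H : SimpleGraph V) (W : Set V) : Type :=
  {v : V // v ∉ W} ⊕ {p : V × V // p.1 ∈ W ∧ H.Adj p.1 p.2}

/-- Adjacency after truncating `W` in `H`.  `ringRel v w w'` tells whether the
neighbors `w, w'` of the truncated vertex `v` are consecutive in the cyclic order
around `v` in the plane embedding (for a degree-3 vertex any two are). -/
def truncAdj {V : Type} (H : SimpleGraph V) (W : Set V) (ringRel : V → V → V → Prop) :
    truncVertexType H W → truncVertexType H W → Prop
  | Sum.inl u, Sum.inl u' => H.Adj u.val u'.val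
  | Sum.inl u, Sum.inr p => p.val.2 = u.val
  | Sum.inr p, Sum.inr q =>
      (p.val.1 = q.val.1 ∧ ringRel p.val.1 p.val.2 q.val.2) ∨
      (p.val.2 = q.val.1 ∧ q.val.2 = p.val.1)
  | _, _ => False

/-- The graph obtained from `H` by truncating every vertex of `W`. -/
def truncateGraph {V : Type} (H : SimpleGraph V) (W : Set V) (ringRel : V → V → V → Prop) :
    SimpleGraph (truncVertexType H W) :=
  SimpleGraph.fromRel (truncAdj H W ringRel)

/-- Ring relation for truncating vertices of degree 3 (all pairs consecutive). -/
def triangleRing {V : Type} : V → V → V → Prop := fun _ _ _ => True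

/-- Ring relation when the link of each truncated vertex is an induced cycle
(e.g. in a triangulation): consecutive means adjacent. -/
def linkRing {V : Type} (H : SimpleGraph V) : V → V → V → Prop := fun _ w w' => H.Adj w w'

/-- Ring relation when any two consecutive neighbors of `v` lie on a common
quadrilateral face: consecutive means having a common neighbor besides `v`. -/
def squareRing {V : Type} (H : SimpleGraph V) : V → V → V → Prop :=
  fun v w w' => ∃ u, u ≠ v ∧ H.Adj w u ∧ H.Adj w' u

def truncatedTetrahedronGraph := truncateGraph tetrahedronGraph Set.univ triangleRing
def truncatedCubeGraph := truncateGraph cubeGraph Set.univ triangleRing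
def truncatedOctahedronGraph := truncateGraph octahedronGraph Set.univ (linkRing octahedronGraph)
def truncatedDodecahedronGraph := truncateGraph dodecahedronGraph Set.univ triangleRing
def truncatedIcosahedronGraph := truncateGraph icosahedronGraph Set.univ (linkRing icosahedronGraph)

/-- The chamfered tetrahedron: truncate one bipartition class of the cube. -/
def chamferedTetrahedronGraph :=
  truncateGraph cubeGraph {x : Fin 3 → Bool | (x 0 ^^ (x 1 ^^ x 2)) = true} triangleRing

/-- The chamfered cube: truncate the degree-4 vertices of the rhombic dodecahedron. -/
def chamferedCubeGraph :=
  truncateGraph rhombicDodecahedronGraph {p | ∃ f, p = Sum.inr f}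
    (squareRing rhombicDodecahedronGraph)

/-- The chamfered octahedron: truncate the degree-3 vertices of the rhombic
dodecahedron. -/
def chamferedOctahedronGraph :=
  truncateGraph rhombicDodecahedronGraph {p | ∃ x, p = Sum.inl x} triangleRing

/-- The chamfered dodecahedron: truncate the degree-5 vertices of the rhombic
triacontahedron. -/
def chamferedDodecahedronGraph :=
  truncateGraph rhombicTriacontahedronGraph {p | ∃ v, p = Sum.inl v}
    (squareRing rhombicTriacontahedronGraph)

/-- The chamfered icosahedron: truncate the degree-3 vertices of the rhombic
triacontahedron. -/
def chamferedIcosahedronGraph :=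
  truncateGraph rhombicTriacontahedronGraph {p | ∃ t, p = Sum.inr t} triangleRing

/-- The rhombicuboctahedron, realized as the expansion (cantellation) of the cube:
vertices are the vertex-face flags of the cube. -/
def rhombicuboctahedronGraph :
    SimpleGraph {p : (Fin 3 → Bool) × (Fin 3 × Bool) // p.1 p.2.1 = p.2.2} :=
  SimpleGraph.fromRel fun a b =>
    (a.val.1 = b.val.1 ∧ a.val.2 ≠ b.val.2) ∨
    (a.val.2 = b.val.2 ∧ cubeGraph.Adj a.val.1 b.val.1)

/-- A pentagon of `H`: a 5-element vertex set inducing a 5-cycle. -/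
def IsPentagon {V : Type} (H : SimpleGraph V) (s : Finset V) : Prop :=
  s.card = 5 ∧ ∀ v ∈ s, ((s : Set V) ∩ H.neighborSet v).ncard = 2

/-- The rhombicosidodecahedron, realized as the expansion (cantellation) of the
dodecahedron: vertices are the vertex-face flags of the dodecahedron (its faces
are exactly its pentagons). -/
def rhombicosidodecahedronGraph :
    SimpleGraph {p : (Bool × Fin 10) × Finset (Bool × Fin 10) //
      IsPentagon dodecahedronGraph p.2 ∧ p.1 ∈ p.2} :=
  SimpleGraph.fromRel fun a b =>
    (a.val.1 = b.val.1 ∧ a.val.2 ≠ b.val.2) ∨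
    (a.val.2 = b.val.2 ∧ dodecahedronGraph.Adj a.val.1 b.val.1)

/-! ### Subdivisions -/

/-- Vertex set of the `f`-subdivision of `H`: old vertices plus `f e` subdivision
vertices for every edge `e`. -/
def subdivVertexType {V : Type} (H : SimpleGraph V) (f : Sym2 V → ℕ) : Type :=
  V ⊕ {x : Sym2 V × ℕ // x.1 ∈ H.edgeSet ∧ x.2 < f x.1}

def subdivAdj {V : Type} (H : SimpleGraph V) (f : Sym2 V → ℕ) :
    subdivVertexType H f → subdivVertexType H f → Prop
  | Sum.inl u, Sum.inl v => H.Adj u v ∧ f s(u, v) = 0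
  | Sum.inl u, Sum.inr x => u ∈ x.val.1
  | _, _ => False

/-- The `f`-subdivision of `H`: each edge `e` is replaced by `f e` parallel paths
of length 2 (edges with `f e = 0` are kept). -/
def parallelSubdivision {V : Type} (H : SimpleGraph V) (f : Sym2 V → ℕ) :
    SimpleGraph (subdivVertexType H f) :=
  SimpleGraph.fromRel (subdivAdj H f)

/-- `G` is (isomorphic to) a parallel subdivision of `H`. -/
def IsParallelSubdivisionOf {α V : Type} (G : SimpleGraph α) (H : SimpleGraph V) : Prop :=
  ∃ f : Sym2 V → ℕ, Nonempty (G ≃g parallelSubdivision H f)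

/-- The `s`-subdivision of `H`: every edge is replaced by `s` parallel paths of
length 2. -/
def sSubdivision {V : Type} (H : SimpleGraph V) (s : ℕ) :
    SimpleGraph (subdivVertexType H (fun _ => s)) :=
  parallelSubdivision H (fun _ => s)

/-- Vertex set of the `C₄`-subdivision of `H`: old vertices, plus two vertices for
each arc of `H`. -/
def c4VertexType {V : Type} (H : SimpleGraph V) : Type :=
  V ⊕ ({p : V × V // H.Adj p.1 p.2} × Bool)

def c4Adj {V : Type} (H : SimpleGraph V) : c4VertexType H → c4VertexType H → Prop
  | Sum.inl v, Sum.inr (a, false) => a.val.1 = v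
  | Sum.inr (a, false), Sum.inr (b, true) => a = b ∨ (a.val.1 = b.val.2 ∧ a.val.2 = b.val.1)
  | _, _ => False

/-- The `C₄`-subdivision of `H`: every edge `vw` is replaced by a 4-cycle attached
to `v` and `w` at opposite vertices. -/
def c4Subdivision {V : Type} (H : SimpleGraph V) : SimpleGraph (c4VertexType H) :=
  SimpleGraph.fromRel (c4Adj H)

/-! ### Cycles, prisms, `C_m^*`, `K_{2,h}^*`, bipyramids -/

/-- The cycle graph on `ZMod m` (for `m ≥ 3`). -/
def cycGraph (m : ℕ) : SimpleGraph (ZMod m) := SimpleGraph.fromRel fun i j => j = i + 1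

/-- The `m`-side prism `C_m □ K₂`. -/
def prismGraph (m : ℕ) : SimpleGraph (ZMod m × Fin 2) :=
  (cycGraph m).boxProd (completeGraph (Fin 2))

/-- The graph `C_m^*`: `m` four-cycles linked in a cyclic fashion. -/
def cmStarGraph (m : ℕ) : SimpleGraph (ZMod m × Fin 4) :=
  SimpleGraph.fromRel fun p q =>
    (p.1 = q.1 ∧ q.2 = p.2 + 1) ∨ (p.2 = 2 ∧ q.2 = 0 ∧ q.1 = p.1 + 1)

/-- The graph `K_{2,h}^*`: `h` disjoint four-cycles, all linked to two extra
vertices at opposite points. -/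
def k2hStarGraph (h : ℕ) : SimpleGraph ((Fin h × Fin 4) ⊕ Bool) :=
  SimpleGraph.fromRel fun x y =>
    (∃ p q : Fin h × Fin 4, x = Sum.inl p ∧ y = Sum.inl q ∧ p.1 = q.1 ∧ q.2 = p.2 + 1) ∨
    (∃ (p : Fin h × Fin 4) (b : Bool), x = Sum.inl p ∧ y = Sum.inr b ∧
      ((b = false ∧ p.2 = 0) ∨ (b = true ∧ p.2 = 2)))

/-- The bipyramid `P*_m`: a cycle of length `m` plus two apexes joined to all of
its vertices. -/
def bipyramidGraph (m : ℕ) : SimpleGraph (ZMod m ⊕ Fin 2) :=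
  SimpleGraph.fromRel fun x y =>
    (∃ i j : ZMod m, x = Sum.inl i ∧ y = Sum.inl j ∧ j = i + 1) ∨
    (∃ (i : ZMod m) (u : Fin 2), x = Sum.inl i ∧ y = Sum.inr u)


/-! ### Contracting the components of `G[c]`, and arc-colored graphs -/

/-- The setoid on `V` whose classes are the connected components of `G[c]`
(and singletons). -/
def contractSetoid {V : Type} [Fintype V] (G : SimpleGraph V) (c : V × V) : Setoid V :=
  (colorGraph G c).reachableSetoid

noncomputable instance contractFintype {V : Type} [Fintype V] (G : SimpleGraph V) (c : V × V) :
    Fintype (Quotient (contractSetoid G c)) :=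
  @Quotient.fintype V _ (contractSetoid G c) fun _ _ => Classical.dec _

/-- The quotient graph `G/c` obtained by contracting every connected component of
`G[c]` to a single vertex. -/
def contractGraph {V : Type} [Fintype V] (G : SimpleGraph V) (c : V × V) :
    SimpleGraph (Quotient (contractSetoid G c)) :=
  SimpleGraph.fromRel fun X Y =>
    ∃ v w : V, Quotient.mk (contractSetoid G c) v = X ∧
      Quotient.mk (contractSetoid G c) w = Y ∧ G.Adj v w

/- The pair coloring `χ/c` of `G/c`: the multiset of `WL²(G)`-colors of the pairs
joining the two contracted classes. -/
open Classical in
noncomputable def contractColor {V : Type} [Fintype V] (G : SimpleGraph V) (c : V × V) :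
    Quotient (contractSetoid G c) → Quotient (contractSetoid G c) →
      Multiset (Quotient (wl2Setoid G.Adj)) :=
  fun X Y =>
    ((Finset.univ (α := V × V)).val.filter fun p =>
        Quotient.mk (contractSetoid G c) p.1 = X ∧ Quotient.mk (contractSetoid G c) p.2 = Y).map
      (Quotient.mk (wl2Setoid G.Adj))

/- The arc coloring associated with a pair coloring `κ`: arcs keep their color,
non-arcs are uncolored. -/
open Classical in
noncomputable def arcColor {V C : Type} (A : V → V → Prop) (κ : V → V → C) :
    V → V → Option C :=
  fun x y => if x = y ∨ A x y then some (κ x y) else none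

/-- 2-WL determines arc orbits of the arc-colored graph `(G, κ)`. -/
def CDeterminesArcOrbits {V C : Type} [Fintype V] (G : SimpleGraph V) (κ : V → V → C) : Prop :=
  ∀ v₁ v₂ : V, (v₁ = v₂ ∨ G.Adj v₁ v₂) →
    ∀ (W : Type) [Fintype W] (H : SimpleGraph W) (κ' : W → W → C),
    ∀ w₁ w₂ : W, (w₁ = w₂ ∨ H.Adj w₁ w₂) →
    wl2EqC G.Adj (arcColor G.Adj κ) H.Adj (arcColor H.Adj κ') (v₁, v₂) (w₁, w₂) →
    ∃ e : V ≃ W, (∀ x y, G.Adj x y ↔ H.Adj (e x) (e y)) ∧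
      (∀ x y, x = y ∨ G.Adj x y → κ x y = κ' (e x) (e y)) ∧ e v₁ = w₁ ∧ e v₂ = w₂

/-- 2-WL determines pair orbits of the arc-colored graph `(G, κ)`. -/
def CDeterminesPairOrbits {V C : Type} [Fintype V] (G : SimpleGraph V) (κ : V → V → C) : Prop :=
  ∀ v₁ v₂ : V,
    ∀ (W : Type) [Fintype W] (H : SimpleGraph W) (κ' : W → W → C),
    ∀ w₁ w₂ : W,
    wl2EqC G.Adj (arcColor G.Adj κ) H.Adj (arcColor H.Adj κ') (v₁, v₂) (w₁, w₂) →
    ∃ e : V ≃ W, (∀ x y, G.Adj x y ↔ H.Adj (e x) (e y)) ∧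
      (∀ x y, x = y ∨ G.Adj x y → κ x y = κ' (e x) (e y)) ∧ e v₁ = w₁ ∧ e v₂ = w₂

namespace IsTwoStable

variable {V C : Type} [Fintype V] {G : SimpleGraph V} {χ : V × V → C}

/- The round-0 color of 2-WL records whether the entries of a pair are equal and whether
they are adjacent, and `χ` refines it. -/
lemma eq_of_eq_diag (hχ : IsTwoStable G χ) {x y z : V} (h : χ (x, y) = χ (z, z)) : x = y :=
  cast (congrArg Prod.fst (hχ.1 _ _ h 0)).symm rfl

lemma adj_of_eq (hχ : IsTwoStable G χ) {p q : V × V} (h : χ p = χ q) (ha : G.Adj p.1 p.2) :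
    G.Adj q.1 q.2 :=
  cast (congrArg (fun c => c.2.1) (hχ.1 _ _ h 0)) ha

lemma exists_mid_of_eq (hχ : IsTwoStable G χ) {v₁ w₁ v₂ w₂ : V}
    (h : χ (v₁, w₁) = χ (v₂, w₂)) (b : V) :
    ∃ u, χ (v₁, b) = χ (v₂, u) ∧ χ (b, w₁) = χ (u, w₂) := by
  have hmem : (χ (b, w₁), χ (v₁, b)) ∈ Finset.univ.val.map fun u => (χ (u, w₂), χ (v₂, u)) := by
    rw [← hχ.2 _ _ h]
    exact Multiset.mem_map_of_mem _ (Finset.mem_univ_val b)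
  obtain ⟨u, -, hu⟩ := Multiset.mem_map.1 hmem
  exact ⟨u, (congrArg Prod.snd hu).symm, (congrArg Prod.fst hu).symm⟩

lemma diag_snd_eq (hχ : IsTwoStable G χ) {x y x' y' : V} (h : χ (x, y) = χ (x', y')) :
    χ (y, y) = χ (y', y') := by
  obtain ⟨u, -, hu⟩ := hχ.exists_mid_of_eq h y
  obtain rfl := hχ.eq_of_eq_diag hu.symm
  exact hu

end IsTwoStable

section AvoidsColors

variable {V C : Type} {G : SimpleGraph V}

def AvoidsColors (χ : V × V → C) (D : Set C) {v w : V} (p : G.Walk v w) : Prop :=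
  ∀ u ∈ p.support, u ≠ v → u ≠ w → χ (u, u) ∉ D

variable {χ : V × V → C} {D : Set C}

lemma AvoidsColors.of_cons {v u w : V} {h : G.Adj v u} {p : G.Walk u w}
    (hp : (Walk.cons h p).IsPath) (hav : AvoidsColors χ D (Walk.cons h p)) :
    AvoidsColors χ D p := fun x hx _ hxw =>
  hav x (Walk.support_cons h p ▸ List.mem_cons_of_mem v hx)
    (fun hxv => (Walk.cons_isPath_iff h p).1 hp |>.2 (hxv ▸ hx)) hxw

lemma AvoidsColors.cons {v u w : V} (h : G.Adj v u) {p : G.Walk u w}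
    (hav : AvoidsColors χ D p) (hu : u ≠ w → χ (u, u) ∉ D) :
    AvoidsColors χ D (Walk.cons h p) := by
  intro x hx hxv hxw
  rw [Walk.support_cons, List.mem_cons] at hx
  rcases hx with rfl | hx
  · exact absurd rfl hxv
  rcases eq_or_ne x u with rfl | hxu
  · exact hu hxw
  · exact hav x hx hxu hxw

lemma AvoidsColors.toPath [DecidableEq V] {v w : V} {p : G.Walk v w}
    (hav : AvoidsColors χ D p) : AvoidsColors χ D (p.toPath : G.Walk v w) :=
  fun x hx => hav x (p.support_toPath_subset_support hx)

end AvoidsColors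

/-- For the next vertex `b` of the path, 2-stability provides `u` with
`χ (v₂, u) = χ (v₁, b)` and `χ (u, w₂) = χ (b, w₁)`; then `u` has the vertex color of `b`
and the walk continues from `u`. -/
theorem IsTwoStable.exists_walk_avoidsColors {V C : Type} [Fintype V] {G : SimpleGraph V}
    {χ : V × V → C} (hχ : IsTwoStable G χ) (D : Set C) {v₁ w₁ : V} (p : G.Walk v₁ w₁)
    (hp : p.IsPath) (hav : AvoidsColors χ D p) {v₂ w₂ : V} (hcol : χ (v₁, w₁) = χ (v₂, w₂)) :
    ∃ q : G.Walk v₂ w₂, AvoidsColors χ D q := by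
  induction p generalizing v₂ with
  | nil =>
    obtain rfl := hχ.eq_of_eq_diag hcol.symm
    exact ⟨Walk.nil, by simp [AvoidsColors]⟩
  | @cons a b w₁ hab p ih =>
    obtain ⟨u, hstep, hrest⟩ := hχ.exists_mid_of_eq hcol b
    obtain ⟨q, hq⟩ := ih hp.of_cons (hav.of_cons hp) hrest
    refine ⟨.cons (hχ.adj_of_eq hstep hab) q, hq.cons _ fun huw => ?_⟩
    have hbw : b ≠ w₁ := by
      rintro rfl
      exact huw (hχ.eq_of_eq_diag hrest.symm)
    exact hχ.diag_snd_eq hstep ▸ hav b (by simp) hab.ne' hbw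

theorem statement_7_general {V C : Type} [Fintype V] (G : SimpleGraph V) (χ : V × V → C)
    (hχ : IsTwoStable G χ) (v₁ w₁ v₂ w₂ : V)
    (hcol : χ (v₁, w₁) = χ (v₂, w₂))
    (D : Set C)
    (hpath : ∃ p : G.Walk v₁ w₁, p.IsPath ∧
      ∀ u ∈ p.support, u ≠ v₁ → u ≠ w₁ → χ (u, u) ∉ D) :
    ∃ p : G.Walk v₂ w₂, p.IsPath ∧
      ∀ u ∈ p.support, u ≠ v₂ → u ≠ w₂ → χ (u, u) ∉ D := by
  classical
  obtain ⟨p, hp, hav⟩ := hpath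
  obtain ⟨q, hq⟩ := hχ.exists_walk_avoidsColors D p hp hav hcol
  exact ⟨q.toPath, q.toPath.2, hq.toPath⟩

/-- Let `χ` be a 2-stable pair coloring of a graph `G`, let
`χ(v₁,w₁) = χ(v₂,w₂)` and let `D` be a set of vertex colors.  If there is a path
from `v₁` to `w₁` avoiding `D`, then there is a path from `v₂` to `w₂`
avoiding `D`. -/
theorem statement_7 {V C : Type} [Fintype V] (G : SimpleGraph V) (χ : V × V → C)
    (hχ : IsTwoStable G χ) (v₁ w₁ v₂ w₂ : V)
    (hcol : χ (v₁, w₁) = χ (v₂, w₂))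
    (D : Set C) (hD : D ⊆ Set.range fun v : V => χ (v, v))
    (hpath : ∃ p : G.Walk v₁ w₁, p.IsPath ∧
      ∀ u ∈ p.support, u ≠ v₁ → u ≠ w₁ → χ (u, u) ∉ D) :
    ∃ p : G.Walk v₂ w₂, p.IsPath ∧
      ∀ u ∈ p.support, u ≠ v₂ → u ≠ w₂ → χ (u, u) ∉ D :=
  statement_7_general G χ hχ v₁ w₁ v₂ w₂ hcol D hpath

end WL
end

section
/- Let G be a graph and let v₁, …, v_ℓ ∈ V(G) be vertices such that Disc_G(v₁,…,v_ℓ) = V(G). Set k = max(2, ℓ+1). Then k-WL determines pair orbits of G. -/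
namespace WL

open SimpleGraph

/-!
Read `k`-WL equivalence as the bijective `k`-pebble game. Call a configuration anchored if every
vertex `x` of `vs` lies under a pebble other than a distinguished free one, opposite the vertex
`ψ x` of `H`. When the free pebble of an anchored configuration is moved, Duplicator's answer
`u'` to `u` fixes the 1-WL colour of `u` with `vs` individualized, because `k`-WL with `k ≥ 2`
also reads off `WL²` colours of pairs. As `Disc_G(vs) = V(G)`, `u'` determines `u`; so
Duplicator's bijection for the free pebble is the same for all anchored configurations sharing
`ψ`, and it preserves adjacency. It remains to make `v₁` and `v₂` the free pebbles of two
anchored configurations with a common `ψ`: `ℓ + 1` pebbles suffice because the last vertex of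
`vs` may cover either `v₁` or `v₂`.
-/

open Function

section

variable {V W X : Type} [Fintype V] [Fintype W]

lemma exists_equiv_of_map_univ_eq {f : V → X} {g : W → X}
    (h : Finset.univ.val.map f = Finset.univ.val.map g) : ∃ e : V ≃ W, ∀ v, g (e v) = f v := by
  classical
  have hfiber : ∀ x, Fintype.card {v // f v = x} = Fintype.card {w // g w = x} := by
    intro x
    simpa [Fintype.card_subtype, Finset.card_def, Multiset.count_map, eq_comm] using
      congrArg (Multiset.count x) h
  exact ⟨Equiv.ofFiberEquiv fun x => Fintype.equivOfCardEq (hfiber x), Equiv.ofFiberEquiv_map _⟩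

lemma map_univ_val_comp_equiv (e : V ≃ W) (f : W → X) :
    Finset.univ.val.map (f ∘ e) = Finset.univ.val.map f := by
  rw [← Multiset.map_map, Multiset.map_univ_val_equiv]

end

lemma exists_forall_of_forall_exists_of_antitone {E : Type} [Finite E] {p : E → ℕ → Prop}
    (hp : ∀ e, Antitone (p e)) (h : ∀ n, ∃ e, p e n) : ∃ e, ∀ n, p e n := by
  choose f hf using h
  obtain ⟨e, he⟩ := Finite.exists_infinite_fiber f
  refine ⟨e, fun n => ?_⟩
  obtain ⟨m, hm, hnm⟩ := (Set.infinite_coe_iff.mp he).exists_gt n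
  exact hp e hnm.le (hm ▸ hf m)

section WLk

variable {V W : Type} [Fintype V] [Fintype W] {A : V → V → Prop} {B : W → W → Prop} {k : ℕ}
  {t : Fin k → V} {s : Fin k → W}

def WLkEquiv (A : V → V → Prop) (B : W → W → Prop) (k : ℕ) (t : Fin k → V) (s : Fin k → W) :
    Prop :=
  ∀ n, wlkRound A k n t = wlkRound B k n s

lemma wlkRound_succ_eq_iff {n : ℕ} :
    wlkRound A k (n + 1) t = wlkRound B k (n + 1) s ↔
      wlkRound A k n t = wlkRound B k n s ∧
        Finset.univ.val.map (fun w i => wlkRound A k n (update t i w)) =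
          Finset.univ.val.map (fun w i => wlkRound B k n (update s i w)) :=
  Prod.ext_iff

lemma wlRound_succ_eq_iff {C : Type} {κ : V → V → C} {κ' : W → W → C} {n : ℕ} {p : V × V}
    {q : W × W} :
    wlRound A κ (n + 1) p = wlRound B κ' (n + 1) q ↔
      wlRound A κ n p = wlRound B κ' n q ∧
        Finset.univ.val.map (fun u => (wlRound A κ n (u, p.2), wlRound A κ n (p.1, u))) =
          Finset.univ.val.map (fun u => (wlRound B κ' n (u, q.2), wlRound B κ' n (q.1, u))) :=
  Prod.ext_iff

namespace WLkEquiv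

lemma eq_iff (h : WLkEquiv A B k t s) (i j : Fin k) : t i = t j ↔ s i = s j :=
  iff_of_eq congr(($(h 0) i j).1)

lemma adj_iff (h : WLkEquiv A B k t s) (i j : Fin k) : A (t i) (t j) ↔ B (s i) (s j) :=
  iff_of_eq congr(($(h 0) i j).2)

lemma exists_equiv_update (h : WLkEquiv A B k t s) :
    ∃ e : V ≃ W, ∀ x i, WLkEquiv A B k (update t i x) (update s i (e x)) := by
  obtain ⟨e, he⟩ := exists_forall_of_forall_exists_of_antitone
    (p := fun (e : V ≃ W) n =>
      ∀ x i, wlkRound A k n (update t i x) = wlkRound B k n (update s i (e x)))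
    (fun e => antitone_nat_of_succ_le fun n hn x i => (wlkRound_succ_eq_iff.mp (hn x i)).1)
    (fun n => by
      obtain ⟨e, he⟩ := exists_equiv_of_map_univ_eq (wlkRound_succ_eq_iff.mp (h (n + 1))).2
      exact ⟨e, fun x i => congrFun (he x).symm i⟩)
  exact ⟨e, fun x i n => he n x i⟩

lemma apply_eq_of_forall_update [Nontrivial (Fin k)] {e : V → W}
    (he : ∀ x i, WLkEquiv A B k (update t i x) (update s i (e x))) (j : Fin k) :
    s j = e (t j) := by
  obtain ⟨i, hij⟩ := exists_ne j
  simpa [update_of_ne hij.symm] using (he (t j) i).eq_iff j i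

lemma exists_of_forall_notMem_eq (h : WLkEquiv A B k t s) (P : Finset (Fin k)) :
    ∀ t' : Fin k → V, (∀ i ∉ P, t' i = t i) →
      ∃ s' : Fin k → W, WLkEquiv A B k t' s' ∧ ∀ i ∉ P, s' i = s i := by
  classical
  induction P using Finset.induction_on with
  | empty =>
    intro t' ht'
    exact ⟨s, by rwa [funext fun i => ht' i (Finset.notMem_empty i)], fun _ _ => rfl⟩
  | insert i P _ ih =>
    intro t' ht'
    obtain ⟨s'', h'', hs''⟩ := ih (update t' i (t i)) fun j hj => by
      by_cases hji : j = i
      · simp [hji]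
      · simp [hji, ht' j (by simp [hji, hj])]
    obtain ⟨e, he⟩ := h''.exists_equiv_update
    refine ⟨update s'' i (e (t' i)), by simpa using he (t' i) i, fun j hj => ?_⟩
    rw [Finset.mem_insert, not_or] at hj
    rw [update_of_ne hj.1, hs'' j hj.2]

lemma wl2Eq_apply [Nontrivial (Fin k)] (h : WLkEquiv A B k t s) (i j : Fin k) :
    wl2Eq A B (t i, t j) (s i, s j) := by
  intro n
  induction n generalizing t s i j with
  | zero =>
    show ((t i = t j : Prop), A (t i) (t j), A (t j) (t i), ()) =
      ((s i = s j : Prop), B (s i) (s j), B (s j) (s i), ())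
    rw [propext (h.eq_iff i j), propext (h.adj_iff i j), propext (h.adj_iff j i)]
  | succ n ih =>
    obtain ⟨e, he⟩ := h.exists_equiv_update
    obtain ⟨p, hp⟩ := exists_ne j
    obtain ⟨q, hq⟩ := exists_ne i
    have hrow : ∀ u, (wlRound A (fun _ _ => ()) n (u, t j), wlRound A (fun _ _ => ()) n (t i, u)) =
        (wlRound B (fun _ _ => ()) n (e u, s j), wlRound B (fun _ _ => ()) n (s i, e u)) := by
      intro u
      have hpj := ih (he u p) p j
      have hiq := ih (he u q) i q
      simp only [update_self, update_of_ne hp.symm, update_of_ne hq.symm] at hpj hiq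
      rw [hpj, hiq]
    refine wlRound_succ_eq_iff.mpr ⟨ih h i j, ?_⟩
    rw [Multiset.map_congr rfl fun u _ => hrow u, ← map_univ_val_comp_equiv e]
    rfl

lemma wl2Eq_update [Nontrivial (Fin k)] {i j : Fin k} {x : V} {y : W}
    (h : WLkEquiv A B k (update t j x) (update s j y)) (hij : i ≠ j) :
    wl2Eq A B (t i, x) (s i, y) ∧ wl2Eq A B (x, t i) (y, s i) := by
  simpa [update_of_ne hij] using And.intro (h.wl2Eq_apply i j) (h.wl2Eq_apply j i)

end WLkEquiv

end WLk

section Anchored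

variable {V W : Type} {A : V → V → Prop} {B : W → W → Prop} {k : ℕ}
  {vs : List V} {ψ : V → W}

def IsAnchored (vs : List V) (ψ : V → W) (t : Fin k → V) (s : Fin k → W) (i : Fin k) : Prop :=
  ∀ x ∈ vs, ∃ j ≠ i, t j = x ∧ s j = ψ x

lemma IsAnchored.update {t : Fin k → V} {s : Fin k → W} {i : Fin k}
    (h : IsAnchored vs ψ t s i) (x : V) (y : W) :
    IsAnchored vs ψ (update t i x) (update s i y) i := by
  intro z hz
  obtain ⟨j, hji, htj, hsj⟩ := h z hz
  exact ⟨j, hji, by rwa [update_of_ne hji], by rwa [update_of_ne hji]⟩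

lemma isAnchored_update_of_forall_mem {t : Fin k → V} {s : Fin k → W} {i i' : Fin k} {x : V}
    (hii' : i ≠ i') (hvs : ∀ z ∈ vs, z = x ∨ ∃ j, j ≠ i ∧ j ≠ i' ∧ t j = z)
    (hs : ∀ j, s j = ψ (t j)) :
    IsAnchored vs ψ (update t i' x) (update s i' (ψ x)) i := by
  intro z hz
  rcases hvs z hz with rfl | ⟨j, hji, hji', rfl⟩
  · exact ⟨i', hii'.symm, by simp, by simp⟩
  · exact ⟨j, hji, by simp [hji'], by simp [hji', hs]⟩

variable [Fintype V] [Fintype W]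

lemma wl1Round_succ_eq_iff {C : Type} {κ : V → V → C} {n : ℕ} {v w : V} :
    wl1Round κ vs (n + 1) v = wl1Round κ vs (n + 1) w ↔
      wl1Round κ vs n v = wl1Round κ vs n w ∧
        Finset.univ.val.map (fun x => (wl1Round κ vs n x, κ v x, κ x v)) =
          Finset.univ.val.map (fun x => (wl1Round κ vs n x, κ w x, κ x w)) :=
  Prod.ext_iff

variable [Nontrivial (Fin k)]

lemma wl1Round_eq_of_isAnchored (n : ℕ) {t t' : Fin k → V} {s s' : Fin k → W} {i i' : Fin k}
    (ha : IsAnchored vs ψ t s i) (ha' : IsAnchored vs ψ t' s' i')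
    (h : WLkEquiv A B k t s) (h' : WLkEquiv A B k t' s') (hs : s i = s' i') :
    wl1Round (fun x y => Quotient.mk (wl2Setoid A) (x, y)) vs n (t i) =
      wl1Round (fun x y => Quotient.mk (wl2Setoid A) (x, y)) vs n (t' i') := by
  induction n generalizing t t' s s' i i' with
  | zero =>
    refine List.map_congr_left fun z hz => propext ?_
    obtain ⟨j, hji, rfl, hsj⟩ := ha z hz
    obtain ⟨j', hj'i', htj', hsj'⟩ := ha' (t j) hz
    rw [h.eq_iff, ← htj', h'.eq_iff, hsj, hsj', hs]
  | succ n ih =>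
    obtain ⟨e, he⟩ := h.exists_equiv_update
    obtain ⟨e', he'⟩ := h'.exists_equiv_update
    set σ := e.trans e'.symm
    have hσ : ∀ x, e' (σ x) = e x := by simp [σ]
    have hcolor : ∀ x, wl1Round (fun x y => Quotient.mk (wl2Setoid A) (x, y)) vs n x =
        wl1Round (fun x y => Quotient.mk (wl2Setoid A) (x, y)) vs n (σ x) := fun x => by
      simpa using ih (ha.update x (e x)) (ha'.update (σ x) (e x)) (he x i)
        (by simpa [hσ] using he' (σ x) i') (by simp)
    obtain ⟨j, hj⟩ := exists_ne i
    obtain ⟨j', hj'⟩ := exists_ne i'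
    have hpair : ∀ x, Quotient.mk (wl2Setoid A) (t i, x) = Quotient.mk _ (t' i', σ x) ∧
        Quotient.mk (wl2Setoid A) (x, t i) = Quotient.mk _ (σ x, t' i') := fun x => by
      obtain ⟨c₁, c₂⟩ := (he x j).wl2Eq_update hj.symm
      obtain ⟨c₁', c₂'⟩ := (he' (σ x) j').wl2Eq_update hj'.symm
      rw [hσ, ← hs] at c₁' c₂'
      exact ⟨Quotient.sound fun n => (c₁ n).trans (c₁' n).symm,
        Quotient.sound fun n => (c₂ n).trans (c₂' n).symm⟩
    refine wl1Round_succ_eq_iff.mpr ⟨ih ha ha' h h' hs, ?_⟩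
    refine (Multiset.map_congr rfl fun x _ => ?_).trans (map_univ_val_comp_equiv σ _)
    simp [hcolor x, hpair x]

variable (hdisc : ∀ v, v ∈ discSet A vs)
include hdisc

lemma eq_of_isAnchored {t t' : Fin k → V} {s s' : Fin k → W} {i i' : Fin k}
    (ha : IsAnchored vs ψ t s i) (ha' : IsAnchored vs ψ t' s' i')
    (h : WLkEquiv A B k t s) (h' : WLkEquiv A B k t' s') (hs : s i = s' i') : t i = t' i' :=
  hdisc (t' i') (t i) fun n => wl1Round_eq_of_isAnchored n ha ha' h h' hs

lemma apply_eq_of_isAnchored {t t' : Fin k → V} {s s' : Fin k → W} {i i' : Fin k} {e : V ≃ W}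
    (ha : IsAnchored vs ψ t s i) (he : ∀ x, WLkEquiv A B k (update t i x) (update s i (e x)))
    (ha' : IsAnchored vs ψ t' s' i') (h' : WLkEquiv A B k t' s') : s' i' = e (t' i') := by
  have := eq_of_isAnchored hdisc (ha.update _ _) ha' (he (e.symm (s' i'))) h' (by simp)
  rw [← this]
  simp

end Anchored

lemma exists_iso_of_isAnchored {V W : Type} [Fintype V] [Fintype W] {G : SimpleGraph V}
    {H : SimpleGraph W} {k : ℕ} [Nontrivial (Fin k)] {vs : List V} {ψ : V → W}
    (hdisc : ∀ v, v ∈ discSet G.Adj vs) {t t' : Fin k → V} {s s' : Fin k → W} {i i' : Fin k}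
    (ha : IsAnchored vs ψ t s i) (ha' : IsAnchored vs ψ t' s' i')
    (h : WLkEquiv G.Adj H.Adj k t s) (h' : WLkEquiv G.Adj H.Adj k t' s') :
    ∃ φ : G ≃g H, φ (t i) = s i ∧ φ (t' i') = s' i' := by
  obtain ⟨e, he⟩ := h.exists_equiv_update
  obtain ⟨j, hj⟩ := exists_ne i
  have hadj : ∀ u x, H.Adj (e u) (e x) ↔ G.Adj u x := fun u x => by
    obtain ⟨eu, heu⟩ := (he u i).exists_equiv_update
    have hx : eu x = e x := by
      simpa using apply_eq_of_isAnchored hdisc ha (he · i) (ha.update x (eu x))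
        (by simpa using heu x i)
    simpa [update_of_ne hj.symm, hx] using ((heu x j).adj_iff i j).symm
  exact ⟨⟨e, hadj _ _⟩, (apply_eq_of_isAnchored hdisc ha (he · i) ha h).symm,
    (apply_eq_of_isAnchored hdisc ha (he · i) ha' h').symm⟩

lemma exists_isAnchored_pair {V W : Type} [Fintype V] [Fintype W] {A : V → V → Prop}
    {B : W → W → Prop} {m : ℕ} (vs : List V) (hvs : vs.length ≤ m + 1)
    {t₀ : Fin (m + 2) → V} {s₀ : Fin (m + 2) → W} (h₀ : WLkEquiv A B (m + 2) t₀ s₀) :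
    ∃ (ψ : V → W) (t t' : Fin (m + 2) → V) (s s' : Fin (m + 2) → W),
      IsAnchored vs ψ t s 0 ∧ WLkEquiv A B (m + 2) t s ∧ t 0 = t₀ 0 ∧ s 0 = s₀ 0 ∧
      IsAnchored vs ψ t' s' 1 ∧ WLkEquiv A B (m + 2) t' s' ∧ t' 1 = t₀ 1 ∧ s' 1 = s₀ 1 := by
  classical
  -- All of `vs` but its last vertex `x` is pebbled on positions `2, 3, …`; `x` then covers
  -- position `1` or position `0`, answered by the same `e x` (for `vs = []`, `x` is a dummy).
  set x := vs.getD (vs.length - 1) (t₀ 0)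
  set t : Fin (m + 2) → V := fun j => if (j : ℕ) < 2 then t₀ j else vs.getD (j - 2) x
  obtain ⟨s, h, hs⟩ :=
    h₀.exists_of_forall_notMem_eq (Finset.univ.filter fun j => 2 ≤ (j : ℕ)) t fun j hj => by
      simp_all [t]
  obtain ⟨e, he⟩ := h.exists_equiv_update
  have hcover : ∀ z ∈ vs, z = x ∨ ∃ j, j ≠ 0 ∧ j ≠ 1 ∧ t j = z := by
    intro z hz
    obtain ⟨n, hn, rfl⟩ := List.mem_iff_getElem.mp hz
    by_cases hlast : n = vs.length - 1
    · subst hlast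
      exact Or.inl (List.getD_eq_getElem _ _ hn).symm
    · refine Or.inr ⟨⟨n + 2, by omega⟩, ?_, ?_, ?_⟩
      · simp [Fin.ext_iff]
      · simp [Fin.ext_iff]
      · simp [t, hn]
  have hse := WLkEquiv.apply_eq_of_forall_update he
  refine ⟨e, update t 1 x, update t 0 x, update s 1 (e x), update s 0 (e x),
    isAnchored_update_of_forall_mem zero_ne_one hcover hse, he x 1, by simp [t], ?_,
    isAnchored_update_of_forall_mem zero_ne_one.symm
      (fun z hz => (hcover z hz).imp_right fun ⟨j, h0, h1, hj⟩ => ⟨j, h1, h0, hj⟩) hse,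
    he x 0, by simp [t], ?_⟩
  · simpa using hs 0 (by simp)
  · simpa using hs 1 (by simp)

/-- Let `G` be a graph and `vs = [v₁, …, v_ℓ]` vertices with
`Disc_G(v₁,…,v_ℓ) = V(G)`, and let `k = max 2 (ℓ+1)`.  Then `k`-WL determines
pair orbits of `G`. -/
theorem statement_9 {V : Type} [Fintype V] (G : SimpleGraph V) (vs : List V)
    (hdisc : ∀ v : V, v ∈ discSet G.Adj vs) :
    ∀ v₁ v₂ : V, ∀ (W : Type) [Fintype W] (H : SimpleGraph W), ∀ w₁ w₂ : W,
      (∀ n, wlkRound G.Adj (max 2 (vs.length + 1)) n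
              (fun i => if (i : ℕ) = 0 then v₁ else v₂) =
            wlkRound H.Adj (max 2 (vs.length + 1)) n
              (fun i => if (i : ℕ) = 0 then w₁ else w₂)) →
      ∃ φ : G ≃g H, φ v₁ = w₁ ∧ φ v₂ = w₂ := by
  intro v₁ v₂ W _ H w₁ w₂ hwl
  have hvs : vs.length + 1 ≤ max 2 (vs.length + 1) := le_max_right _ _
  obtain ⟨m, hm⟩ := Nat.exists_eq_add_of_le' (le_max_left 2 (vs.length + 1))
  generalize max 2 (vs.length + 1) = k at hwl hvs hm
  subst hm
  obtain ⟨ψ, t, t', s, s', ha, h, ht, hs, ha', h', ht', hs'⟩ :=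
    exists_isAnchored_pair (A := G.Adj) (B := H.Adj) vs (by omega) hwl
  obtain ⟨φ, hφ, hφ'⟩ := exists_iso_of_isAnchored hdisc ha ha' h h'
  refine ⟨φ, ?_, ?_⟩
  · simpa [ht, hs] using hφ
  · simpa [ht', hs'] using hφ'

end WL
end

section
/- Let G be a graph, let χ = WL²(G), and let c ∈ C_E(G,χ) be an edge color that defines a matching. Equip the quotient graph G/c with the arc coloring λ given by λ(X₁,X₂) = (χ/c)(X₁,X₂) for all arcs (X₁,X₂) of G/c. If 2-WL determines arc orbits (respectively, pair orbits) of the arc-colored graph (G/c, λ), then 2-WL determines arc orbits (respectively, pair orbits) of G. -/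
/-! Since `c` defines a matching, every class of `G/c` is a single vertex or the two ends of a
`c`-colored edge, and these ends have different vertex colors. The same holds in any graph `H`
containing a pair with the same `WL²`-color as a pair of `G`, once `H/c` is colored by the
`WL²(G)`-colors of the pairs of `H`. Then 2-WL on `G/c` and `H/c` is simulated by 2-WL on `G`
and `H`: a round of 2-WL on a quotient counts classes, and a class is recovered from its vertices
by weighting each with the inverse of the class size, which the vertex colors determine. So a pair
of `G` and a pair of `H` with the same `WL²`-color give pairs of `G/c` and `H/c` with the same
color, the assumption provides a color-preserving isomorphism `G/c ≅ H/c`, and it lifts to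
`G ≅ H` by sending each vertex to the vertex of the image class with the same vertex color. -/

namespace WL

open SimpleGraph

theorem count_map_univ {α γ : Type*} [Fintype α] [DecidableEq γ] (f : α → γ) (x : γ) :
    (Finset.univ.val.map f).count x = Nat.card {a // f a = x} := by
  classical
  rw [Multiset.count_map, Nat.card_eq_fintype_card, Fintype.card_subtype, Finset.card,
    Finset.filter_val]
  simp only [eq_comm]

theorem exists_equiv_of_map_univ_eq_s16 {α β γ : Type*} [Fintype α] [Fintype β] {f : α → γ}
    {g : β → γ} (h : Finset.univ.val.map f = Finset.univ.val.map g) :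
    ∃ σ : α ≃ β, ∀ a, f a = g (σ a) := by
  classical
  have fiber (x : γ) : {a // f a = x} ≃ {b // g b = x} :=
    (Finite.card_eq.mp <| by rw [← count_map_univ, ← count_map_univ, h]).some
  exact ⟨Equiv.ofFiberEquiv fiber, fun a => (Equiv.ofFiberEquiv_map fiber a).symm⟩

theorem count_map_filter_univ {α γ : Type*} [Fintype α] [DecidableEq γ] (P : α → Prop)
    [DecidablePred P] (f : α → γ) (x : γ) :
    ((Finset.univ.val.filter P).map f).count x = Nat.card {a // P a ∧ f a = x} := by
  classical
  rw [Multiset.count_map, Multiset.filter_filter, Nat.card_eq_fintype_card, Fintype.card_subtype,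
    Finset.card, Finset.filter_val]
  simp only [eq_comm, and_comm]

theorem natCard_le_of_forall_exists_rel {α β : Type*} [Finite β] {P : α → Prop} {Q : β → Prop}
    (R : α → β → Prop) (hR : ∀ a, P a → ∃ b, Q b ∧ R a b)
    (hinj : ∀ a a' b, P a → P a' → R a b → R a' b → a = a') :
    Nat.card {a // P a} ≤ Nat.card {b // Q b} := by
  choose f hf using hR
  refine Nat.card_le_card_of_injective (fun a => ⟨f a.1 a.2, (hf a.1 a.2).1⟩) fun a a' he => ?_
  have he : f a.1 a.2 = f a'.1 a'.2 := congrArg Subtype.val he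
  exact Subtype.ext (hinj _ _ _ a.2 a'.2 (hf a.1 a.2).2 (he ▸ (hf a'.1 a'.2).2))

theorem natCast_card_subtype_quotient {α K : Type*} [Fintype α] [DivisionRing K] [CharZero K]
    (s : Setoid α) [Fintype (Quotient s)] (P : Quotient s → Prop) [DecidablePred P] :
    (Nat.card {X // P X} : K) =
      ∑ a, if P (Quotient.mk s a) then (Nat.card {b // Quotient.mk s b = Quotient.mk s a} : K)⁻¹
        else 0 := by
  classical
  rw [← Finset.sum_fiberwise Finset.univ (Quotient.mk s), Nat.card_eq_fintype_card,
    Fintype.card_subtype, Finset.card_filter, Nat.cast_sum]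
  refine Finset.sum_congr rfl fun X _ => ?_
  induction X using Quotient.inductionOn with | h a => ?_
  have hfiber : Nat.card {b // Quotient.mk s b = Quotient.mk s a} =
      (Finset.univ.filter fun b => Quotient.mk s b = Quotient.mk s a).card := by
    rw [Nat.card_eq_fintype_card, Fintype.card_subtype]
  have hne : ((Finset.univ.filter fun b => Quotient.mk s b = Quotient.mk s a).card : K) ≠ 0 :=
    Nat.cast_ne_zero.mpr (Finset.card_pos.mpr ⟨a, by simp⟩).ne'
  rw [Finset.sum_congr rfl fun b hb => by rw [(Finset.mem_filter.mp hb).2], Finset.sum_const,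
    nsmul_eq_mul, hfiber]
  split_ifs <;> simp [hne]

theorem map_univ_quotient_eq {α β γ : Type*} [Fintype α] [Fintype β] {s₁ : Setoid α}
    {s₂ : Setoid β} [Fintype (Quotient s₁)] [Fintype (Quotient s₂)] (σ : α ≃ β)
    {F₁ : Quotient s₁ → γ} {F₂ : Quotient s₂ → γ}
    (hF : ∀ a, F₁ (Quotient.mk s₁ a) = F₂ (Quotient.mk s₂ (σ a)))
    (hcard : ∀ a, Nat.card {b // Quotient.mk s₁ b = Quotient.mk s₁ a} =
      Nat.card {b // Quotient.mk s₂ b = Quotient.mk s₂ (σ a)}) :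
    Finset.univ.val.map F₁ = Finset.univ.val.map F₂ := by
  classical
  ext t
  rw [count_map_univ, count_map_univ, ← Nat.cast_inj (R := ℚ), natCast_card_subtype_quotient,
    natCast_card_subtype_quotient]
  exact Fintype.sum_equiv σ _ _ fun a => by rw [hF, hcard]

theorem reachable_iff_eq_or_adj_of_adj_unique {α : Type*} {M : SimpleGraph α}
    (hM : ∀ ⦃x y z⦄, M.Adj x y → M.Adj x z → y = z) {x y : α} :
    M.Reachable x y ↔ x = y ∨ M.Adj x y := by
  refine ⟨?_, fun h => h.elim (· ▸ .refl x) Adj.reachable⟩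
  rintro ⟨w⟩
  induction w with
  | nil => exact .inl rfl
  | cons h _ ih => exact ih.elim (fun e => .inr (e ▸ h)) (fun h' => .inl (hM h.symm h'))

section Refinement

variable {V W D C : Type} [Fintype V] [Fintype W] [Fintype D] {A : V → V → Prop}
  {κ : V → V → C} {B : W → W → Prop} {κ' : W → W → C}

theorem wlRound_eq_of_le {m n : ℕ} (hmn : m ≤ n) {p : V × V} {q : W × W}
    (h : wlRound A κ n p = wlRound B κ' n q) : wlRound A κ m p = wlRound B κ' m q := by
  induction n, hmn using Nat.le_induction with
  | base => exact h
  | succ n _ ih => exact ih (congrArg Prod.fst h)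

theorem wl2EqC.symm {p : V × V} {q : W × W} (h : wl2EqC A κ B κ' p q) :
    wl2EqC B κ' A κ q p :=
  fun n => (h n).symm

theorem wl2EqC.trans {E : D → D → Prop} {κ'' : D → D → C} {p : V × V} {q : W × W}
    {r : D × D} (h : wl2EqC A κ B κ' p q) (h' : wl2EqC B κ' E κ'' q r) :
    wl2EqC A κ E κ'' p r :=
  fun n => (h n).trans (h' n)

/-- Since the refinement rounds are nested, a bijection matching the rows and columns of `p`
and `q` at infinitely many rounds matches them at every round; there are only finitely many
bijections to choose from. -/
theorem wl2EqC.exists_equiv {p : V × V} {q : W × W} (h : wl2EqC A κ B κ' p q) :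
    ∃ σ : V ≃ W, ∀ u, wl2EqC A κ B κ' (u, p.2) (σ u, q.2) ∧
      wl2EqC A κ B κ' (p.1, u) (q.1, σ u) := by
  classical
  have hround (n : ℕ) : ∃ σ : V ≃ W, ∀ u,
      wlRound A κ n (u, p.2) = wlRound B κ' n (σ u, q.2) ∧
      wlRound A κ n (p.1, u) = wlRound B κ' n (q.1, σ u) := by
    obtain ⟨σ, hσ⟩ := exists_equiv_of_map_univ_eq_s16 (congrArg Prod.snd (h (n + 1)))
    exact ⟨σ, fun u => Prod.ext_iff.mp (hσ u)⟩
  choose σ hσ using hround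
  obtain ⟨τ, hτ⟩ := Finite.exists_infinite_fiber σ
  have hτ_round (m : ℕ) (u : V) : wlRound A κ m (u, p.2) = wlRound B κ' m (τ u, q.2) ∧
      wlRound A κ m (p.1, u) = wlRound B κ' m (q.1, τ u) := by
    obtain ⟨n, hn, hmn⟩ := (Set.infinite_coe_iff.mp hτ).exists_gt m
    obtain ⟨h₁, h₂⟩ := hσ n u
    rw [show σ n = τ from hn] at h₁ h₂
    exact ⟨wlRound_eq_of_le hmn.le h₁, wlRound_eq_of_le hmn.le h₂⟩
  exact ⟨τ, fun u => ⟨fun m => (hτ_round m u).1, fun m => (hτ_round m u).2⟩⟩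

theorem wl2EqC.eq_iff {p : V × V} {q : W × W} (h : wl2EqC A κ B κ' p q) :
    p.1 = p.2 ↔ q.1 = q.2 :=
  iff_of_eq (congrArg (·.1) (h 0))

theorem wl2EqC.adj_iff {p : V × V} {q : W × W} (h : wl2EqC A κ B κ' p q) :
    A p.1 p.2 ↔ B q.1 q.2 :=
  iff_of_eq (congrArg (·.2.1) (h 0))

theorem wl2EqC.card_eq {p : V × V} {q : W × W} (h : wl2EqC A κ B κ' p q) :
    Fintype.card V = Fintype.card W := by
  have h₁ := congrArg (Multiset.card ·.2) (h 1)
  simpa only [wlRound, Multiset.card_map, Finset.card_val, Finset.card_univ] using h₁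

theorem wl2EqC.diag_fst {p : V × V} {q : W × W} (h : wl2EqC A κ B κ' p q) :
    wl2EqC A κ B κ' (p.1, p.1) (q.1, q.1) := by
  obtain ⟨σ, hσ⟩ := h.exists_equiv
  have h₁ := (hσ p.1).2
  have hσ₁ : σ p.1 = q.1 := ((wl2EqC.eq_iff h₁).mp rfl).symm
  rwa [hσ₁] at h₁

theorem wl2EqC.diag_snd {p : V × V} {q : W × W} (h : wl2EqC A κ B κ' p q) :
    wl2EqC A κ B κ' (p.2, p.2) (q.2, q.2) := by
  obtain ⟨σ, hσ⟩ := h.exists_equiv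
  have h₂ := (hσ p.2).1
  have hσ₂ : σ p.2 = q.2 := (wl2EqC.eq_iff h₂).mp rfl
  rwa [hσ₂] at h₂

theorem wl2EqC.exists_wl2EqC {p : V × V} {q : W × W} (h : wl2EqC A κ B κ' p q) (r : W × W) :
    ∃ p', wl2EqC A κ B κ' p' r := by
  obtain ⟨σ, hσ⟩ := h.exists_equiv
  have h₁ := (hσ (σ.symm r.1)).2
  rw [σ.apply_symm_apply] at h₁
  obtain ⟨τ, hτ⟩ := h₁.diag_snd.exists_equiv
  have h₂ := (hτ (τ.symm r.2)).2
  rw [τ.apply_symm_apply] at h₂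
  exact ⟨_, h₂⟩

theorem wlRound_swap (n : ℕ) {a b : V} {a' b' : W}
    (h : wlRound A (fun _ _ => ()) n (a, b) = wlRound B (fun _ _ => ()) n (a', b')) :
    wlRound A (fun _ _ => ()) n (b, a) = wlRound B (fun _ _ => ()) n (b', a') := by
  induction n generalizing a b a' b' with
  | zero =>
    have h₁ : (a = b) = (a' = b') := congrArg (·.1) h
    have h₂ : A a b = B a' b' := congrArg (·.2.1) h
    have h₃ : A b a = B b' a' := congrArg (·.2.2.1) h
    change ((b = a : Prop), A b a, A a b, ()) = ((b' = a' : Prop), B b' a', B a' b', ())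
    rw [eq_comm (a := b), eq_comm (a := b'), h₁, h₂, h₃]
  | succ n ih =>
    obtain ⟨σ, hσ⟩ := exists_equiv_of_map_univ_eq_s16 (congrArg Prod.snd h)
    refine Prod.ext (ih (congrArg Prod.fst h)) ?_
    change Finset.univ.val.map (fun u => (wlRound A _ n (u, a), wlRound A _ n (b, u))) =
      Finset.univ.val.map (fun w => (wlRound B _ n (w, a'), wlRound B _ n (b', w)))
    rw [← Multiset.map_univ_val_equiv σ, Multiset.map_map]
    exact Multiset.map_congr rfl fun u _ => Prod.ext (ih (Prod.ext_iff.mp (hσ u)).2)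
      (ih (Prod.ext_iff.mp (hσ u)).1)

theorem wl2Eq.swap {a b : V} {a' b' : W} (h : wl2Eq A B (a, b) (a', b')) :
    wl2Eq A B (b, a) (b', a') :=
  fun n => wlRound_swap n (h n)

end Refinement

section Matching

variable {V W W₁ W₂ : Type} [Fintype V] [Fintype W] [Fintype W₁] [Fintype W₂]
  {G : SimpleGraph V} {c : V × V} {B : SimpleGraph W} {B₁ : SimpleGraph W₁}
  {B₂ : SimpleGraph W₂}

def HasColor (G : SimpleGraph V) (c : V × V) (B : SimpleGraph W) (x y : W) : Prop :=
  wl2Eq B.Adj G.Adj (x, y) c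

/-- `B[c]`; for `B = G` this is `colorGraph G c` by definition. -/
def crossColorGraph (G : SimpleGraph V) (c : V × V) (B : SimpleGraph W) : SimpleGraph W :=
  SimpleGraph.fromRel fun x y => B.Adj x y ∧ HasColor G c B x y

def crossSetoid (G : SimpleGraph V) (c : V × V) (B : SimpleGraph W) : Setoid W :=
  (crossColorGraph G c B).reachableSetoid

theorem hasColor_iff_of_wl2Eq {a b : W₁} {x y : W₂} (h : wl2Eq B₁.Adj B₂.Adj (a, b) (x, y)) :
    HasColor G c B₁ a b ↔ HasColor G c B₂ x y :=
  ⟨wl2EqC.trans (wl2EqC.symm h), wl2EqC.trans h⟩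

theorem HasColor.ne (hc : EdgeColor G c) {x y : W} (h : HasColor G c B x y) : x ≠ y :=
  fun hxy => G.ne_of_adj hc ((wl2EqC.eq_iff h).mp hxy)

theorem HasColor.adj (hc : EdgeColor G c) {x y : W} (h : HasColor G c B x y) : B.Adj x y :=
  (wl2EqC.adj_iff h).mpr hc

theorem crossColorGraph_adj (hc : EdgeColor G c) {x y : W} :
    (crossColorGraph G c B).Adj x y ↔ HasColor G c B x y ∨ HasColor G c B y x := by
  rw [crossColorGraph, fromRel_adj]
  refine ⟨fun ⟨_, h⟩ => h.imp And.right And.right, fun h => ⟨?_, ?_⟩⟩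
  · exact h.elim (HasColor.ne hc) fun h' => (HasColor.ne hc h').symm
  · exact h.imp (fun h' => ⟨HasColor.adj hc h', h'⟩) fun h' => ⟨HasColor.adj hc h', h'⟩

theorem HasColor.not_wl2Eq_diag (hm : DefinesMatching G c) {x y : W₁} {x' y' : W₂}
    (h : HasColor G c B₁ x y) (h' : HasColor G c B₂ x' y') :
    ¬ wl2Eq B₁.Adj B₂.Adj (x, x) (y', y') := fun hxy =>
  (hm c.1 c.2 fun _ => rfl).1 <|
    ((wl2EqC.diag_fst h).symm.trans hxy).trans (wl2EqC.diag_snd h')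

theorem HasColor.snd_unique (hm : DefinesMatching G c) {x y y' : W} (h : HasColor G c B x y)
    (h' : HasColor G c B x y') : y = y' := by
  obtain ⟨σ, hσ⟩ := wl2EqC.exists_equiv (wl2EqC.symm h)
  have key {z : W} (hz : HasColor G c B x z) : z = σ c.2 := by
    have := (hm c.1 c.2 fun _ => rfl).2.2 (σ.symm z)
      ((hσ (σ.symm z)).2.trans (by rwa [σ.apply_symm_apply]))
    rw [← this, σ.apply_symm_apply]
  rw [key h, key h']

theorem HasColor.fst_unique (hm : DefinesMatching G c) {x x' y : W} (h : HasColor G c B x y)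
    (h' : HasColor G c B x' y) : x = x' := by
  obtain ⟨σ, hσ⟩ := wl2EqC.exists_equiv (wl2EqC.symm h)
  have key {z : W} (hz : HasColor G c B z y) : z = σ c.1 := by
    have := (hm c.1 c.2 fun _ => rfl).2.1 (σ.symm z)
      ((hσ (σ.symm z)).1.trans (by rwa [σ.apply_symm_apply]))
    rw [← this, σ.apply_symm_apply]
  rw [key h, key h']

end Matching

section Classes

variable {V W W₁ W₂ : Type} [Fintype V] [Fintype W] [Fintype W₁] [Fintype W₂]
  {G : SimpleGraph V} {c : V × V} {B : SimpleGraph W} {B₁ : SimpleGraph W₁}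
  {B₂ : SimpleGraph W₂}

theorem crossColorGraph_adj_unique (hc : EdgeColor G c) (hm : DefinesMatching G c)
    ⦃x y z : W⦄ (hy : (crossColorGraph G c B).Adj x y) (hz : (crossColorGraph G c B).Adj x z) :
    y = z := by
  rw [crossColorGraph_adj hc] at hy hz
  rcases hy with hy | hy <;> rcases hz with hz | hz
  · exact hy.snd_unique hm hz
  · exact absurd (fun _ => rfl) (hy.not_wl2Eq_diag hm hz)
  · exact absurd (fun _ => rfl) (hz.not_wl2Eq_diag hm hy)
  · exact hy.fst_unique hm hz

theorem crossSetoid_mk_eq_iff (hc : EdgeColor G c) (hm : DefinesMatching G c) {x y : W} :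
    Quotient.mk (crossSetoid G c B) x = Quotient.mk (crossSetoid G c B) y ↔
      x = y ∨ HasColor G c B x y ∨ HasColor G c B y x := by
  rw [Quotient.eq, ← crossColorGraph_adj hc]
  exact reachable_iff_eq_or_adj_of_adj_unique (crossColorGraph_adj_unique hc hm)

theorem mk_eq_iff_of_wl2Eq (hc : EdgeColor G c) (hm : DefinesMatching G c) {a b : W₁}
    {x y : W₂} (h : wl2Eq B₁.Adj B₂.Adj (a, b) (x, y)) :
    Quotient.mk (crossSetoid G c B₁) a = Quotient.mk (crossSetoid G c B₁) b ↔
      Quotient.mk (crossSetoid G c B₂) x = Quotient.mk (crossSetoid G c B₂) y := by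
  rw [crossSetoid_mk_eq_iff hc hm, crossSetoid_mk_eq_iff hc hm, wl2EqC.eq_iff h,
    hasColor_iff_of_wl2Eq h, hasColor_iff_of_wl2Eq h.swap]

theorem eq_of_mk_eq_of_wl2Eq (hc : EdgeColor G c) (hm : DefinesMatching G c) {x y : W}
    (hxy : Quotient.mk (crossSetoid G c B) x = Quotient.mk (crossSetoid G c B) y)
    (h : wl2Eq B.Adj B.Adj (x, x) (y, y)) : x = y := by
  rcases (crossSetoid_mk_eq_iff hc hm).mp hxy with hxy | hxy | hxy
  · exact hxy
  · exact absurd h (hxy.not_wl2Eq_diag hm hxy)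
  · exact absurd (wl2EqC.symm h) (hxy.not_wl2Eq_diag hm hxy)

theorem prod_eq_of_mk_eq_of_wl2Eq (hc : EdgeColor G c) (hm : DefinesMatching G c)
    {r r' : W × W} (h : wl2Eq B.Adj B.Adj r r')
    (h₁ : Quotient.mk (crossSetoid G c B) r.1 = Quotient.mk (crossSetoid G c B) r'.1)
    (h₂ : Quotient.mk (crossSetoid G c B) r.2 = Quotient.mk (crossSetoid G c B) r'.2) :
    r = r' :=
  Prod.ext (eq_of_mk_eq_of_wl2Eq hc hm h₁ (wl2EqC.diag_fst h))
    (eq_of_mk_eq_of_wl2Eq hc hm h₂ (wl2EqC.diag_snd h))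

theorem exists_mk_eq_snd (hc : EdgeColor G c) (hm : DefinesMatching G c) {a p : W₁} {x q : W₂}
    (h : wl2Eq B₁.Adj B₂.Adj (a, p) (x, q)) {b : W₁}
    (hb : Quotient.mk (crossSetoid G c B₁) b = Quotient.mk (crossSetoid G c B₁) p) :
    ∃ y, Quotient.mk (crossSetoid G c B₂) y = Quotient.mk (crossSetoid G c B₂) q ∧
      wl2Eq B₁.Adj B₂.Adj (a, b) (x, y) := by
  obtain ⟨σ, hσ⟩ := wl2EqC.exists_equiv h
  exact ⟨σ b, (mk_eq_iff_of_wl2Eq hc hm (hσ b).1).mp hb, (hσ b).2⟩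

theorem exists_mk_eq_pair (hc : EdgeColor G c) (hm : DefinesMatching G c) {p₁ p₂ a b : W₁}
    {q₁ q₂ : W₂} (h : wl2Eq B₁.Adj B₂.Adj (p₁, p₂) (q₁, q₂))
    (ha : Quotient.mk (crossSetoid G c B₁) a = Quotient.mk (crossSetoid G c B₁) p₁)
    (hb : Quotient.mk (crossSetoid G c B₁) b = Quotient.mk (crossSetoid G c B₁) p₂) :
    ∃ x y, Quotient.mk (crossSetoid G c B₂) x = Quotient.mk (crossSetoid G c B₂) q₁ ∧
      Quotient.mk (crossSetoid G c B₂) y = Quotient.mk (crossSetoid G c B₂) q₂ ∧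
      wl2Eq B₁.Adj B₂.Adj (a, b) (x, y) := by
  obtain ⟨x, hx, hax⟩ := exists_mk_eq_snd hc hm h.swap ha
  obtain ⟨y, hy, hby⟩ := exists_mk_eq_snd hc hm hax.swap hb
  exact ⟨x, y, hx, hy, hby⟩

theorem natCard_class_le (hc : EdgeColor G c) (hm : DefinesMatching G c) {u : W₁} {x : W₂}
    (h : wl2Eq B₁.Adj B₂.Adj (u, u) (x, x)) :
    Nat.card {b // Quotient.mk (crossSetoid G c B₁) b = Quotient.mk (crossSetoid G c B₁) u} ≤
      Nat.card {y // Quotient.mk (crossSetoid G c B₂) y = Quotient.mk (crossSetoid G c B₂) x} := by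
  refine natCard_le_of_forall_exists_rel (fun b y => wl2Eq B₁.Adj B₂.Adj (u, b) (x, y))
    (fun b hb => exists_mk_eq_snd hc hm h hb) fun b b' y hb hb' hby hby' => ?_
  exact congrArg Prod.snd <|
    prod_eq_of_mk_eq_of_wl2Eq hc hm (hby.trans (wl2EqC.symm hby')) rfl (hb.trans hb'.symm)

theorem natCard_class_eq (hc : EdgeColor G c) (hm : DefinesMatching G c) {u : W₁} {x : W₂}
    (h : wl2Eq B₁.Adj B₂.Adj (u, u) (x, x)) :
    Nat.card {b // Quotient.mk (crossSetoid G c B₁) b = Quotient.mk (crossSetoid G c B₁) u} =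
      Nat.card {y // Quotient.mk (crossSetoid G c B₂) y = Quotient.mk (crossSetoid G c B₂) x} :=
  (natCard_class_le hc hm h).antisymm (natCard_class_le hc hm (wl2EqC.symm h))

end Classes

section Contraction

variable {V W W₁ W₂ : Type} [Fintype V] [Fintype W] [Fintype W₁] [Fintype W₂]
  {G : SimpleGraph V} {c : V × V} {B : SimpleGraph W} {B₁ : SimpleGraph W₁}
  {B₂ : SimpleGraph W₂}

noncomputable instance (G : SimpleGraph V) (c : V × V) (B : SimpleGraph W) :
    Fintype (Quotient (crossSetoid G c B)) :=
  @Quotient.fintype W _ _ fun _ _ => Classical.dec _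

/-- `B/c`; for `B = G` this is `contractGraph G c` by definition. -/
def crossContract (G : SimpleGraph V) (c : V × V) (B : SimpleGraph W) :
    SimpleGraph (Quotient (crossSetoid G c B)) :=
  SimpleGraph.fromRel fun X Y =>
    ∃ x y : W, Quotient.mk (crossSetoid G c B) x = X ∧
      Quotient.mk (crossSetoid G c B) y = Y ∧ B.Adj x y

open Classical in
/-- The `WL²(G)`-color of a pair of `B`, when it has one (the junk value is the class of `c`). -/
noncomputable def crossPairColor (G : SimpleGraph V) (c : V × V) (B : SimpleGraph W)
    (r : W × W) : Quotient (wl2Setoid G.Adj) :=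
  if h : ∃ p, wl2Eq G.Adj B.Adj p r then Quotient.mk _ h.choose else Quotient.mk _ c

open Classical in
/-- `χ/c` on `B/c`. -/
noncomputable def crossContractColor (G : SimpleGraph V) (c : V × V) (B : SimpleGraph W)
    (X Y : Quotient (crossSetoid G c B)) : Multiset (Quotient (wl2Setoid G.Adj)) :=
  ((Finset.univ (α := W × W)).val.filter fun r =>
      Quotient.mk (crossSetoid G c B) r.1 = X ∧ Quotient.mk (crossSetoid G c B) r.2 = Y).map
    (crossPairColor G c B)

theorem crossContract_adj {X Y : Quotient (crossSetoid G c B)} :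
    (crossContract G c B).Adj X Y ↔ X ≠ Y ∧ ∃ x y : W, Quotient.mk (crossSetoid G c B) x = X ∧
      Quotient.mk (crossSetoid G c B) y = Y ∧ B.Adj x y := by
  rw [crossContract, fromRel_adj]
  refine and_congr_right fun _ => ⟨?_, .inl⟩
  rintro (h | ⟨x, y, hx, hy, hxy⟩)
  exacts [h, ⟨y, x, hy, hx, hxy.symm⟩]

theorem mk_eq_or_crossContract_adj {x y : W} (h : x = y ∨ B.Adj x y) :
    Quotient.mk (crossSetoid G c B) x = Quotient.mk (crossSetoid G c B) y ∨
      (crossContract G c B).Adj (Quotient.mk _ x) (Quotient.mk _ y) := by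
  by_cases hxy : Quotient.mk (crossSetoid G c B) x = Quotient.mk (crossSetoid G c B) y
  · exact .inl hxy
  · refine .inr (crossContract_adj.mpr ⟨hxy, x, y, rfl, rfl, ?_⟩)
    exact h.resolve_left fun e => hxy (congrArg _ e)

theorem crossContract_adj_of_wl2Eq (hc : EdgeColor G c) (hm : DefinesMatching G c)
    {p₁ p₂ : W₁} {q₁ q₂ : W₂} (h : wl2Eq B₁.Adj B₂.Adj (p₁, p₂) (q₁, q₂))
    (hp : (crossContract G c B₁).Adj (Quotient.mk _ p₁) (Quotient.mk _ p₂)) :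
    (crossContract G c B₂).Adj (Quotient.mk _ q₁) (Quotient.mk _ q₂) := by
  obtain ⟨hne, a, b, ha, hb, hab⟩ := crossContract_adj.mp hp
  obtain ⟨x, y, hx, hy, hxy⟩ := exists_mk_eq_pair hc hm h ha hb
  exact crossContract_adj.mpr
    ⟨mt (mk_eq_iff_of_wl2Eq hc hm h).mpr hne, x, y, hx, hy, (wl2EqC.adj_iff hxy).mp hab⟩

theorem crossPairColor_eq {p : V × V} {r : W × W} (h : wl2Eq G.Adj B.Adj p r) :
    crossPairColor G c B r = Quotient.mk _ p := by
  have hr : ∃ p, wl2Eq G.Adj B.Adj p r := ⟨p, h⟩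
  rw [crossPairColor, dif_pos hr]
  exact Quotient.sound (hr.choose_spec.trans h.symm)

theorem crossPairColor_eq_of_wl2Eq {r : W₁ × W₁} {s : W₂ × W₂}
    (h : wl2Eq B₁.Adj B₂.Adj r s) : crossPairColor G c B₁ r = crossPairColor G c B₂ s := by
  by_cases hr : ∃ p, wl2Eq G.Adj B₁.Adj p r
  · obtain ⟨p, hp⟩ := hr
    rw [crossPairColor_eq hp, crossPairColor_eq (hp.trans h)]
  · have hs : ¬ ∃ p, wl2Eq G.Adj B₂.Adj p s := fun ⟨p, hp⟩ => hr ⟨p, hp.trans h.symm⟩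
    rw [crossPairColor, crossPairColor, dif_neg hr, dif_neg hs]

theorem wl2Eq_of_crossPairColor_eq {p : V × V} {r : W × W} (hr : ∃ p, wl2Eq G.Adj B.Adj p r)
    (h : crossPairColor G c B r = Quotient.mk _ p) : wl2Eq G.Adj B.Adj p r := by
  obtain ⟨p', hp'⟩ := hr
  exact (Quotient.exact ((crossPairColor_eq hp').symm.trans h)).symm.trans hp'

theorem contractColor_eq_crossContractColor : contractColor G c = crossContractColor G c G := by
  funext X Y
  exact Multiset.map_congr rfl fun r _ => (crossPairColor_eq fun _ => rfl).symm

end Contraction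

section Simulation

variable {V W₁ W₂ : Type} [Fintype V] [Fintype W₁] [Fintype W₂]
  {G : SimpleGraph V} {c : V × V} {B₁ : SimpleGraph W₁} {B₂ : SimpleGraph W₂}

open Classical in
theorem count_crossContractColor_le (hc : EdgeColor G c) (hm : DefinesMatching G c)
    {p₁ p₂ : W₁} {q₁ q₂ : W₂} (h : wl2Eq B₁.Adj B₂.Adj (p₁, p₂) (q₁, q₂))
    (γ : Quotient (wl2Setoid G.Adj)) :
    (crossContractColor G c B₁ (Quotient.mk _ p₁) (Quotient.mk _ p₂)).count γ ≤
      (crossContractColor G c B₂ (Quotient.mk _ q₁) (Quotient.mk _ q₂)).count γ := by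
  rw [crossContractColor, crossContractColor, count_map_filter_univ, count_map_filter_univ]
  refine natCard_le_of_forall_exists_rel (fun r s => wl2Eq B₁.Adj B₂.Adj r s) ?_ ?_
  · rintro ⟨a, b⟩ ⟨⟨ha, hb⟩, hγ⟩
    obtain ⟨x, y, hx, hy, hxy⟩ := exists_mk_eq_pair hc hm h ha hb
    exact ⟨(x, y), ⟨⟨hx, hy⟩, (crossPairColor_eq_of_wl2Eq hxy).symm.trans hγ⟩, hxy⟩
  · rintro r r' s ⟨⟨h₁, h₂⟩, -⟩ ⟨⟨h₁', h₂'⟩, -⟩ hs hs'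
    exact prod_eq_of_mk_eq_of_wl2Eq hc hm (hs.trans hs'.symm) (h₁.trans h₁'.symm)
      (h₂.trans h₂'.symm)

theorem crossContractColor_eq_of_wl2Eq (hc : EdgeColor G c) (hm : DefinesMatching G c)
    {p₁ p₂ : W₁} {q₁ q₂ : W₂} (h : wl2Eq B₁.Adj B₂.Adj (p₁, p₂) (q₁, q₂)) :
    crossContractColor G c B₁ (Quotient.mk _ p₁) (Quotient.mk _ p₂) =
      crossContractColor G c B₂ (Quotient.mk _ q₁) (Quotient.mk _ q₂) := by
  classical
  exact Multiset.ext.mpr fun γ =>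
    (count_crossContractColor_le hc hm h γ).antisymm (count_crossContractColor_le hc hm h.symm γ)

theorem arcColor_crossContract_eq_of_wl2Eq (hc : EdgeColor G c) (hm : DefinesMatching G c)
    {p₁ p₂ : W₁} {q₁ q₂ : W₂} (h : wl2Eq B₁.Adj B₂.Adj (p₁, p₂) (q₁, q₂)) :
    arcColor (crossContract G c B₁).Adj (crossContractColor G c B₁)
        (Quotient.mk _ p₁) (Quotient.mk _ p₂) =
      arcColor (crossContract G c B₂).Adj (crossContractColor G c B₂)
        (Quotient.mk _ q₁) (Quotient.mk _ q₂) := by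
  have harc := or_congr (mk_eq_iff_of_wl2Eq hc hm h)
    ⟨crossContract_adj_of_wl2Eq hc hm h, crossContract_adj_of_wl2Eq hc hm h.symm⟩
  rw [arcColor, arcColor, crossContractColor_eq_of_wl2Eq hc hm h]
  split_ifs with h₁ h₂ h₂
  exacts [rfl, absurd (harc.mp h₁) h₂, absurd (harc.mpr h₂) h₁, rfl]

theorem wlRound_crossContract_eq (hc : EdgeColor G c) (hm : DefinesMatching G c) (n : ℕ)
    {p : W₁ × W₁} {q : W₂ × W₂} (h : wl2Eq B₁.Adj B₂.Adj p q) :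
    wlRound (crossContract G c B₁).Adj
        (arcColor (crossContract G c B₁).Adj (crossContractColor G c B₁)) n
        (Quotient.mk _ p.1, Quotient.mk _ p.2) =
      wlRound (crossContract G c B₂).Adj
        (arcColor (crossContract G c B₂).Adj (crossContractColor G c B₂)) n
        (Quotient.mk _ q.1, Quotient.mk _ q.2) := by
  induction n generalizing p q with
  | zero =>
    have hadj {p : W₁ × W₁} {q : W₂ × W₂} (h : wl2Eq B₁.Adj B₂.Adj p q) :
        (crossContract G c B₁).Adj (Quotient.mk _ p.1) (Quotient.mk _ p.2) =
          (crossContract G c B₂).Adj (Quotient.mk _ q.1) (Quotient.mk _ q.2) :=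
      propext ⟨crossContract_adj_of_wl2Eq hc hm h, crossContract_adj_of_wl2Eq hc hm h.symm⟩
    exact Prod.ext (propext (mk_eq_iff_of_wl2Eq hc hm h)) <| Prod.ext (hadj h) <|
      Prod.ext (hadj h.swap) (arcColor_crossContract_eq_of_wl2Eq hc hm h)
  | succ n ih =>
    obtain ⟨σ, hσ⟩ := wl2EqC.exists_equiv h
    exact Prod.ext (ih h) <| map_univ_quotient_eq σ (fun u => Prod.ext (ih (hσ u).1) (ih (hσ u).2))
      fun u => natCard_class_eq hc hm (wl2EqC.diag_fst (hσ u).1)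

end Simulation

section Lift

variable {V W : Type} [Fintype V] [Fintype W] {G : SimpleGraph V} {c : V × V}
  {H : SimpleGraph W}

theorem exists_wl2Eq_of_crossContractColor_eq (hcov : ∀ r : W × W, ∃ p, wl2Eq G.Adj H.Adj p r)
    {a b : V} {Z T : Quotient (crossSetoid G c H)}
    (hκ : crossContractColor G c G (Quotient.mk _ a) (Quotient.mk _ b) =
      crossContractColor G c H Z T) :
    ∃ r : W × W, Quotient.mk _ r.1 = Z ∧ Quotient.mk _ r.2 = T ∧ wl2Eq G.Adj H.Adj (a, b) r := by
  classical
  have hmem : Quotient.mk _ (a, b) ∈ crossContractColor G c G (Quotient.mk _ a) (Quotient.mk _ b) :=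
    Multiset.mem_map.mpr ⟨(a, b), Multiset.mem_filter.mpr ⟨Finset.mem_univ_val _, rfl, rfl⟩,
      crossPairColor_eq fun _ => rfl⟩
  rw [hκ] at hmem
  obtain ⟨r, hr, hra⟩ := Multiset.mem_map.mp hmem
  obtain ⟨-, hr₁, hr₂⟩ := Multiset.mem_filter.mp hr
  exact ⟨r, hr₁, hr₂, wl2Eq_of_crossPairColor_eq (hcov r) hra⟩

theorem exists_iso_of_crossContract_iso (hc : EdgeColor G c) (hm : DefinesMatching G c)
    {v₁ v₂ : V} {w₁ w₂ : W} (h : wl2Eq G.Adj H.Adj (v₁, v₂) (w₁, w₂))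
    (e : Quotient (crossSetoid G c G) ≃ Quotient (crossSetoid G c H))
    (he : ∀ X Y, (crossContract G c G).Adj X Y ↔ (crossContract G c H).Adj (e X) (e Y))
    (hκ : ∀ X Y, X = Y ∨ (crossContract G c G).Adj X Y →
      crossContractColor G c G X Y = crossContractColor G c H (e X) (e Y))
    (he₁ : e (Quotient.mk _ v₁) = Quotient.mk _ w₁)
    (he₂ : e (Quotient.mk _ v₂) = Quotient.mk _ w₂) :
    ∃ φ : G ≃g H, φ v₁ = w₁ ∧ φ v₂ = w₂ := by
  have hpair (a b : V) (hab : Quotient.mk (crossSetoid G c G) a = Quotient.mk _ b ∨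
      (crossContract G c G).Adj (Quotient.mk _ a) (Quotient.mk _ b)) :=
    exists_wl2Eq_of_crossContractColor_eq h.exists_wl2EqC (hκ _ _ hab)
  have hvert (a : V) : ∃ x, Quotient.mk _ x = e (Quotient.mk _ a) ∧
      wl2Eq G.Adj H.Adj (a, a) (x, x) := by
    obtain ⟨⟨x, y⟩, hx, -, hxy⟩ := hpair a a (.inl rfl)
    obtain rfl : x = y := (wl2EqC.eq_iff hxy).mp rfl
    exact ⟨x, hx, hxy⟩
  choose φ hφ using hvert
  have hφ_eq {a : V} {x : W} (hx : Quotient.mk _ x = e (Quotient.mk _ a))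
      (hax : wl2Eq G.Adj H.Adj (a, a) (x, x)) : x = φ a :=
    eq_of_mk_eq_of_wl2Eq hc hm (hx.trans (hφ a).1.symm) (hax.symm.trans (hφ a).2)
  have hadj (a b : V) : G.Adj a b ↔ H.Adj (φ a) (φ b) := by
    by_cases hab : Quotient.mk (crossSetoid G c G) a = Quotient.mk _ b ∨
        (crossContract G c G).Adj (Quotient.mk _ a) (Quotient.mk _ b)
    · obtain ⟨r, hr₁, hr₂, hr⟩ := hpair a b hab
      rw [wl2EqC.adj_iff hr, hφ_eq hr₁ hr.diag_fst, hφ_eq hr₂ hr.diag_snd]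
    · refine iff_of_false (fun h' => hab (mk_eq_or_crossContract_adj (.inr h'))) fun h' => hab ?_
      rw [← e.injective.eq_iff, he, ← (hφ a).1, ← (hφ b).1]
      exact mk_eq_or_crossContract_adj (.inr h')
  have hinj : Function.Injective φ := fun a b hab => by
    refine eq_of_mk_eq_of_wl2Eq hc hm (e.injective ?_) ((hφ a).2.trans (hab ▸ (hφ b).2.symm))
    rw [← (hφ a).1, ← (hφ b).1, hab]
  have hbij := (Fintype.bijective_iff_injective_and_card φ).mpr ⟨hinj, wl2EqC.card_eq h⟩
  refine ⟨⟨Equiv.ofBijective φ hbij, (hadj _ _).symm⟩, ?_, ?_⟩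
  · exact (hφ_eq (he₁ ▸ rfl) h.diag_fst).symm
  · exact (hφ_eq (he₂ ▸ rfl) h.diag_snd).symm

end Lift

/-- Let `c` be an edge color of `WL²(G)` that defines a matching
and equip `G/c` with the arc coloring `λ = χ/c`.  If 2-WL determines arc orbits
(resp. pair orbits) of the arc-colored graph `(G/c, λ)`, then 2-WL determines arc
orbits (resp. pair orbits) of `G`. -/
theorem statement_16 {V : Type} [Fintype V] (G : SimpleGraph V)
    (c : V × V) (hc : EdgeColor G c) (hm : DefinesMatching G c) :
    (CDeterminesArcOrbits (contractGraph G c) (contractColor G c) →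
      DeterminesArcOrbits G) ∧
    (CDeterminesPairOrbits (contractGraph G c) (contractColor G c) →
      DeterminesPairOrbits G) := by
  rw [contractColor_eq_crossContractColor]
  refine ⟨fun hyp v₁ v₂ hv W _ H w₁ w₂ hw h => ?_, fun hyp v₁ v₂ W _ H w₁ w₂ h => ?_⟩
  · obtain ⟨e, he, hκ, he₁, he₂⟩ := hyp _ _ (mk_eq_or_crossContract_adj hv) _
      (crossContract G c H) (crossContractColor G c H) _ _ (mk_eq_or_crossContract_adj hw)
      fun n => wlRound_crossContract_eq hc hm n h
    exact exists_iso_of_crossContract_iso hc hm h e he hκ he₁ he₂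
  · obtain ⟨e, he, hκ, he₁, he₂⟩ := hyp _ _ _ (crossContract G c H) (crossContractColor G c H)
      _ _ fun n => wlRound_crossContract_eq hc hm n h
    exact exists_iso_of_crossContract_iso hc hm h e he hκ he₁ he₂

end WL
end
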